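/- arXiv:2102.00356 — 4 statements merged into one kernel-verified Lean document; each statement's English description precedes it below -/
import Mathlib

section
/- If π is a coupling of μ and ν whose disintegration satisfies π_x = δ_{f(x)} for μ-a.e. x, for some measurable function f : X → X, then ∫ W(π_x, ν) dμ(x) = ∫∫ d(y,z) dν(y) dν(z). In particular the Wasserstein correlation coefficient equals 1. -/
open MeasureTheory ProbabilityTheory Set

noncomputable section

/-- `γ` is a coupling of `ρ` and `σ`. -/
def IsCoupling {Y : Type*} [MeasurableSpace Y] (γ : Measure (Y × Y)) (ρ σ : Measure Y) : Prop :=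
  γ.map Prod.fst = ρ ∧ γ.map Prod.snd = σ

/-- Optimal transport cost with cost function `c`. -/
def Wc {Y : Type*} [MeasurableSpace Y] (c : Y → Y → ℝ) (ρ σ : Measure Y) : ℝ :=
  sInf { r | ∃ γ : Measure (Y × Y), IsProbabilityMeasure γ ∧ IsCoupling γ ρ σ ∧
    r = ∫ p, c p.1 p.2 ∂γ }

/-- 1-Wasserstein distance. -/
def W {Y : Type*} [MeasurableSpace Y] [PseudoMetricSpace Y] (ρ σ : Measure Y) : ℝ :=
  Wc dist ρ σ

/-- `K` is a (measurable, probability) disintegration of `π` with respect to its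
first marginal `μ`. -/
def IsDisintegration {Y : Type*} [MeasurableSpace Y] (π : Measure (Y × Y)) (μ : Measure Y)
    (K : Y → Measure Y) : Prop :=
  Measurable K ∧ (∀ x, IsProbabilityMeasure (K x)) ∧
    ∀ A B : Set Y, MeasurableSet A → MeasurableSet B →
      π (A ×ˢ B) = ∫⁻ x in A, K x B ∂μ

/-- Adapted (bicausal) Wasserstein distance, expressed through the first marginals
`μ, μ'` and disintegrations `K, K'` of the two couplings. -/
def AW {Y : Type*} [MeasurableSpace Y] [PseudoMetricSpace Y] (μ μ' : Measure Y)
    (K K' : Y → Measure Y) : ℝ :=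
  sInf { r | ∃ γ : Measure (Y × Y), IsProbabilityMeasure γ ∧ IsCoupling γ μ μ' ∧
    r = ∫ p, (dist p.1 p.2 + W (K p.1) (K' p.2)) ∂γ }

/-- Mean pairwise distance `∫∫ d(y,z) dν(y) dν(z)`. -/
def meanDist {Y : Type*} [MeasurableSpace Y] [PseudoMetricSpace Y] (ν : Measure Y) : ℝ :=
  ∫ y, ∫ z, dist y z ∂ν ∂ν


variable {X : Type*} [MetricSpace X] [MeasurableSpace X] [BorelSpace X] [PolishSpace X]


set_option linter.unusedSectionVars false

lemma coupling_dirac_integral (a : X) (nu : Measure X) [IsProbabilityMeasure nu]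
    (γ : Measure (X × X)) (hγ : IsCoupling γ (Measure.dirac a) nu) :
    ∫ p, dist p.1 p.2 ∂γ = ∫ z, dist a z ∂nu := by
  have hfst : γ {p : X × X | p.1 ≠ a} = 0 := by
    have : {p : X × X | p.1 ≠ a} = Prod.fst ⁻¹' ({a}ᶜ) := rfl
    rw [this, ← Measure.map_apply measurable_fst (measurableSet_singleton a).compl, hγ.1]
    simp
  have hae : (fun p : X × X => dist p.1 p.2) =ᵐ[γ] fun p => dist a p.2 := by
    filter_upwards [ae_iff.2 hfst] with p hp
    rw [show p.1 = a from hp]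
  rw [integral_congr_ae hae, ← hγ.2]
  exact (integral_map measurable_snd.aemeasurable
    ((continuous_const.dist continuous_id).aestronglyMeasurable :
      AEStronglyMeasurable (fun z => dist a z) (γ.map Prod.snd))).symm

lemma W_dirac (a : X) (nu : Measure X) [IsProbabilityMeasure nu] :
    W (Measure.dirac a) nu = ∫ z, dist a z ∂nu := by
  have hset : { r | ∃ γ : Measure (X × X), IsProbabilityMeasure γ ∧
      IsCoupling γ (Measure.dirac a) nu ∧ r = ∫ p, dist p.1 p.2 ∂γ } = {∫ z, dist a z ∂nu} := by
    ext r
    constructor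
    · rintro ⟨γ, _, hc, rfl⟩
      exact coupling_dirac_integral a nu γ hc
    · rintro rfl
      refine ⟨(Measure.dirac a).prod nu, inferInstance, ⟨?_, ?_⟩, ?_⟩
      · show ((Measure.dirac a).prod nu).fst = _
        exact Measure.fst_prod
      · show ((Measure.dirac a).prod nu).snd = _
        exact Measure.snd_prod
      · exact (coupling_dirac_integral a nu _ ⟨Measure.fst_prod, Measure.snd_prod⟩).symm
  rw [W, Wc, hset, csInf_singleton]

theorem wasserstein_correlation_eq_one_of_deterministic
    (mu nu : Measure X) [IsProbabilityMeasure mu] [IsProbabilityMeasure nu]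
    (pi : Measure (X × X)) [IsProbabilityMeasure pi]
    (hpi : IsCoupling pi mu nu)
    (K : X → Measure X) (hK : IsDisintegration pi mu K)
    (hmom : ∀ x₀ : X, Integrable (fun y => dist y x₀) nu)
    (hnu : 0 < meanDist nu)
    (f : X → X) (hf : Measurable f)
    (hdet : ∀ᵐ x ∂mu, K x = Measure.dirac (f x)) :
    (∫ x, W (K x) nu ∂mu = meanDist nu) ∧
      (∫ x, W (K x) nu ∂mu) / meanDist nu = 1 := by
  have hint : ∀ y : X, Integrable (fun z => dist y z) nu := fun y => by
    simpa [dist_comm] using hmom y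
  have hnumap : nu = mu.map f := by
    ext B hB
    have h1 : nu B = pi (Set.univ ×ˢ B) := by
      rw [← hpi.2, Measure.map_apply measurable_snd hB]
      congr 1
      ext p
      simp
    rw [h1, hK.2.2 Set.univ B MeasurableSet.univ hB, Measure.restrict_univ,
      Measure.map_apply hf hB]
    rw [lintegral_congr_ae (g := fun x => (Measure.dirac (f x)) B)
      (by filter_upwards [hdet] with x hx; rw [hx])]
    have : ∀ x, (Measure.dirac (f x)) B = (f ⁻¹' B).indicator (fun _ => (1 : ENNReal)) x := by
      intro x
      rw [Measure.dirac_apply' _ hB]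
      rfl
    simp_rw [this]
    exact lintegral_indicator_one (hf hB)
  have hWae : (fun x => W (K x) nu) =ᵐ[mu] fun x => ∫ z, dist (f x) z ∂nu := by
    filter_upwards [hdet] with x hx
    rw [hx, W_dirac]
  have hlip : LipschitzWith 1 (fun y => ∫ z, dist y z ∂nu) := by
    apply LipschitzWith.of_dist_le_mul
    intro y y'
    rw [NNReal.coe_one, one_mul, Real.dist_eq, ← integral_sub (hint y) (hint y')]
    calc |∫ z, (dist y z - dist y' z) ∂nu|
        ≤ ∫ z, |dist y z - dist y' z| ∂nu := by
          simpa [Real.norm_eq_abs] using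
            norm_integral_le_integral_norm (fun z => dist y z - dist y' z) (μ := nu)
      _ ≤ ∫ _z, dist y y' ∂nu := by
          refine integral_mono ((hint y).sub (hint y')).abs (integrable_const _) ?_
          intro z
          exact abs_dist_sub_le y y' z
      _ = dist y y' := by simp
  have key : ∫ x, W (K x) nu ∂mu = meanDist nu := by
    have hmap := integral_map (μ := mu) hf.aemeasurable
      hlip.continuous.aestronglyMeasurable
    rw [← hnumap] at hmap
    rw [integral_congr_ae hWae, meanDist]
    exact hmap.symm
  exact ⟨key, by rw [key]; exact div_self (ne_of_gt hnu)⟩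

end
end

section
/- For a bivariate Gaussian π = N(a, Σ) on ℝ² with marginal variances σ₁², σ₂² > 0 and correlation ρ, the disintegration with respect to the first coordinate is π_{x₁} = N(a₂ + (σ₂/σ₁)ρ(x₁−a₁), (1−ρ²)σ₂²), and the average squared 2-Wasserstein distance to the second marginal ν = N(a₂,σ₂²) satisfies ∫ W₂(π_{x₁}, ν)² dμ(x₁) = 2σ₂²(1 − √(1−ρ²)). -/
open MeasureTheory ProbabilityTheory Set

noncomputable section

/-- 2-Wasserstein distance on ℝ. -/
def W2 (ρ σ : Measure ℝ) : ℝ :=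
  Real.sqrt (Wc (fun y z => dist y z ^ 2) ρ σ)


section AuxLemmas
open Real Filter Asymptotics Topology
open scoped NNReal ENNReal

lemma integrable_sq_mul_exp {b : ℝ} (hb : 0 < b) :
    Integrable fun x : ℝ => x ^ 2 * Real.exp (-b * x ^ 2) := by
  have h := integrable_rpow_mul_exp_neg_mul_sq hb (s := 2) (by norm_num)
  simpa [Real.rpow_two] using h

lemma integral_sq_mul_exp {b : ℝ} (hb : 0 < b) :
    ∫ x : ℝ, x ^ 2 * Real.exp (-b * x ^ 2) = Real.sqrt (π / b) / (2 * b) := by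
  have hb' : (2 : ℝ) * b ≠ 0 := by positivity
  -- even function
  have heven : ∫ x : ℝ, x ^ 2 * Real.exp (-b * x ^ 2)
      = 2 * ∫ x in Ioi (0:ℝ), x ^ 2 * Real.exp (-b * x ^ 2) := by
    rw [← integral_comp_abs (f := fun x => x ^ 2 * Real.exp (-b * x ^ 2))]
    simp [sq_abs]
  -- FTC on Ioi 0
  have hderiv : ∀ x ∈ Ici (0:ℝ), HasDerivAt (fun x : ℝ => -(2*b)⁻¹ * (x * Real.exp (-b * x ^ 2)))
      (x ^ 2 * Real.exp (-b * x ^ 2) - (2*b)⁻¹ * Real.exp (-b * x ^ 2)) x := by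
    intro x _
    have h1 : HasDerivAt (fun x : ℝ => x * Real.exp (-b * x ^ 2))
        (1 * Real.exp (-b * x ^ 2) + x * (Real.exp (-b * x ^ 2) * (-b * (2 * x ^ 1)))) x := by
      exact (hasDerivAt_id x).mul (((hasDerivAt_pow 2 x).const_mul (-b)).exp)
    have h2 := h1.const_mul (-(2*b)⁻¹)
    have hk : (2*b)⁻¹ * (2*b) = 1 := inv_mul_cancel₀ hb'
    exact h2.congr_deriv (by linear_combination (x ^ 2 * Real.exp (-b * x ^ 2)) * hk)
  have hint : IntegrableOn (fun x : ℝ => x ^ 2 * Real.exp (-b * x ^ 2)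
      - (2*b)⁻¹ * Real.exp (-b * x ^ 2)) (Ioi 0) := by
    exact ((integrable_sq_mul_exp hb).sub
      ((integrable_exp_neg_mul_sq hb).const_mul _)).integrableOn
  have htend : Tendsto (fun x : ℝ => -(2*b)⁻¹ * (x * Real.exp (-b * x ^ 2))) atTop (𝓝 0) := by
    have h0 : Tendsto (fun x : ℝ => x * Real.exp (-b * x ^ 2)) atTop (𝓝 0) := by
      have hexp : Tendsto (fun x : ℝ => Real.exp (-(1/2) * x)) atTop (𝓝 0) :=
        Real.tendsto_exp_atBot.comp (tendsto_id.const_mul_atTop_of_neg (by norm_num))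
      have := (rpow_mul_exp_neg_mul_sq_isLittleO_exp_neg hb 1).trans_tendsto hexp
      simpa [Real.rpow_one] using this
    simpa using h0.const_mul (-(2*b)⁻¹)
  have hftc := integral_Ioi_of_hasDerivAt_of_tendsto' hderiv hint htend
  simp only [mul_zero, zero_pow, zero_mul, neg_zero, mul_zero] at hftc
  -- hftc : ∫ x in Ioi 0, (x^2 * exp - (2b)⁻¹ exp) = 0 - 0
  have hsub : ∫ x in Ioi (0:ℝ), (x ^ 2 * Real.exp (-b * x ^ 2) - (2*b)⁻¹ * Real.exp (-b * x ^ 2))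
      = (∫ x in Ioi (0:ℝ), x ^ 2 * Real.exp (-b * x ^ 2))
        - (2*b)⁻¹ * ∫ x in Ioi (0:ℝ), Real.exp (-b * x ^ 2) := by
    rw [integral_sub ((integrable_sq_mul_exp hb).integrableOn)
      (((integrable_exp_neg_mul_sq hb).const_mul _).integrableOn), integral_const_mul]
  rw [hsub] at hftc
  have : ∫ x in Ioi (0:ℝ), x ^ 2 * Real.exp (-b * x ^ 2)
      = (2*b)⁻¹ * ∫ x in Ioi (0:ℝ), Real.exp (-b * x ^ 2) := by linarith
  rw [heven, this, integral_gaussian_Ioi]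
  field_simp

lemma integral_mul_exp_odd {b : ℝ} : ∫ x : ℝ, x * Real.exp (-b * x ^ 2) = 0 := by
  have h := integral_neg_eq_self (fun x : ℝ => x * Real.exp (-b * x ^ 2)) volume
  have h' : -∫ x : ℝ, x * Real.exp (-b * x ^ 2) = ∫ x : ℝ, x * Real.exp (-b * x ^ 2) := by
    rw [← integral_neg]; simpa [neg_mul] using h
  linarith


lemma std_integral_eq (g : ℝ → ℝ) :
    ∫ x, g x ∂(gaussianReal 0 1) = ∫ x, gaussianPDFReal 0 1 x * g x := by
  rw [gaussianReal_of_var_ne_zero 0 one_ne_zero]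
  have hpdf : gaussianPDF 0 1 = fun x => ((Real.toNNReal (gaussianPDFReal 0 1 x) : ℝ≥0) : ℝ≥0∞) := by
    ext x; simp [gaussianPDF, ENNReal.ofReal]
  rw [hpdf, integral_withDensity_eq_integral_smul
    ((measurable_gaussianPDFReal 0 1).real_toNNReal) g]
  refine integral_congr_ae (Filter.Eventually.of_forall fun x => ?_)
  simp [NNReal.smul_def, Real.coe_toNNReal _ (gaussianPDFReal_nonneg 0 1 x)]

lemma std_integrable_iff (g : ℝ → ℝ) :
    Integrable g (gaussianReal 0 1) ↔
      Integrable (fun x => gaussianPDFReal 0 1 x * g x) volume := by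
  rw [gaussianReal_of_var_ne_zero 0 one_ne_zero]
  have hpdf : gaussianPDF 0 1 = fun x => ((Real.toNNReal (gaussianPDFReal 0 1 x) : ℝ≥0) : ℝ≥0∞) := by
    ext x; simp [gaussianPDF, ENNReal.ofReal]
  rw [hpdf, integrable_withDensity_iff_integrable_smul
    ((measurable_gaussianPDFReal 0 1).real_toNNReal)]
  constructor <;> intro h <;> refine h.congr (Filter.Eventually.of_forall fun x => ?_) <;>
    simp [NNReal.smul_def, Real.coe_toNNReal _ (gaussianPDFReal_nonneg 0 1 x)]

lemma pdf_std (x : ℝ) :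
    gaussianPDFReal 0 1 x = (Real.sqrt (2 * π))⁻¹ * Real.exp (-(1/2 : ℝ) * x ^ 2) := by
  simp only [gaussianPDFReal, NNReal.coe_one, mul_one, sub_zero]
  ring_nf

lemma std_integrable_id : Integrable (fun x : ℝ => x) (gaussianReal 0 1) := by
  rw [std_integrable_iff]
  have : Integrable (fun x : ℝ => (Real.sqrt (2 * π))⁻¹ * (x * Real.exp (-(1/2 : ℝ) * x ^ 2)))
      volume := (integrable_mul_exp_neg_mul_sq (by norm_num : (0:ℝ) < 1/2)).const_mul _
  refine this.congr (Filter.Eventually.of_forall fun x => ?_)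
  simp only [pdf_std]; ring

lemma integrable_sq_mul_exp' {b : ℝ} (hb : 0 < b) :
    Integrable fun x : ℝ => x ^ 2 * Real.exp (-b * x ^ 2) := by
  have h := integrable_rpow_mul_exp_neg_mul_sq hb (s := 2) (by norm_num)
  simpa [Real.rpow_two] using h

lemma std_integrable_sq : Integrable (fun x : ℝ => x ^ 2) (gaussianReal 0 1) := by
  rw [std_integrable_iff]
  have : Integrable (fun x : ℝ => (Real.sqrt (2 * π))⁻¹ * (x ^ 2 * Real.exp (-(1/2 : ℝ) * x ^ 2)))
      volume := (integrable_sq_mul_exp' (by norm_num : (0:ℝ) < 1/2)).const_mul _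
  refine this.congr (Filter.Eventually.of_forall fun x => ?_)
  simp only [pdf_std]; ring

lemma std_integral_id : ∫ x, x ∂(gaussianReal 0 1) = 0 := by
  rw [std_integral_eq]
  have : ∫ x : ℝ, gaussianPDFReal 0 1 x * x
      = (Real.sqrt (2 * π))⁻¹ * ∫ x : ℝ, x * Real.exp (-(1/2 : ℝ) * x ^ 2) := by
    rw [← integral_const_mul]
    refine integral_congr_ae (Filter.Eventually.of_forall fun x => ?_)
    simp only [pdf_std]; ring
  rw [this, integral_mul_exp_odd, mul_zero]

lemma std_integral_sq : ∫ x, x ^ 2 ∂(gaussianReal 0 1) = 1 := by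
  rw [std_integral_eq]
  have h : ∫ x : ℝ, gaussianPDFReal 0 1 x * x ^ 2
      = (Real.sqrt (2 * π))⁻¹ * ∫ x : ℝ, x ^ 2 * Real.exp (-(1/2 : ℝ) * x ^ 2) := by
    rw [← integral_const_mul]
    refine integral_congr_ae (Filter.Eventually.of_forall fun x => ?_)
    simp only [pdf_std]; ring
  rw [h, integral_sq_mul_exp (by norm_num : (0:ℝ) < 1/2)]
  have h2 : π / (1/2 : ℝ) = 2 * π := by ring
  rw [h2]
  have h3 : (0:ℝ) < Real.sqrt (2 * π) := Real.sqrt_pos.mpr (by positivity)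
  field_simp

-- map representation
lemma gaussianReal_eq_map (m : ℝ) (v : ℝ≥0) :
    gaussianReal m v = (gaussianReal 0 1).map (fun z => m + Real.sqrt v * z) := by
  have h1 : (gaussianReal 0 1).map (fun z => Real.sqrt v * z) = gaussianReal 0 v := by
    have h := gaussianReal_map_const_mul (μ := 0) (v := 1) (Real.sqrt v)
    have hv : (⟨(Real.sqrt v) ^ 2, sq_nonneg _⟩ : ℝ≥0) * 1 = v := by
      rw [mul_one]
      exact NNReal.coe_injective (by simp [Real.sq_sqrt v.coe_nonneg]; rfl)
    rw [show (fun z : ℝ => Real.sqrt v * z) = (Real.sqrt v * ·) from rfl, h, mul_zero]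
    exact congrArg (gaussianReal 0) hv
  have h2 : (gaussianReal 0 v).map (fun x => m + x) = gaussianReal m v := by
    have h := gaussianReal_map_const_add (μ := 0) (v := v) m
    rw [show (fun x : ℝ => m + x) = (m + ·) from rfl, h, zero_add]
  rw [← h2, ← h1, Measure.map_map (measurable_const_add m) (measurable_id'.const_mul _)]
  rfl


lemma std_affine_sq_integrable (A B : ℝ) :
    Integrable (fun z : ℝ => (A + B * z) ^ 2) (gaussianReal 0 1) := by
  have h : (fun z : ℝ => (A + B * z) ^ 2)
      = fun z => A ^ 2 + ((2 * A * B) * z + (B ^ 2) * z ^ 2) := by ext z; ring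
  rw [h]
  exact (integrable_const _).add
    ((std_integrable_id.const_mul _).add (std_integrable_sq.const_mul _))

lemma std_affine_sq_integral (A B : ℝ) :
    ∫ z, (A + B * z) ^ 2 ∂(gaussianReal 0 1) = A ^ 2 + B ^ 2 := by
  have h1 : Integrable (fun z : ℝ => (2 * A * B) * z) (gaussianReal 0 1) :=
    std_integrable_id.const_mul _
  have h2 : Integrable (fun z : ℝ => (B ^ 2) * z ^ 2) (gaussianReal 0 1) :=
    std_integrable_sq.const_mul _
  have h12 : Integrable (fun z : ℝ => (2 * A * B) * z + (B ^ 2) * z ^ 2) (gaussianReal 0 1) :=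
    h1.add h2
  have h : (fun z : ℝ => (A + B * z) ^ 2)
      = fun z => A ^ 2 + ((2 * A * B) * z + (B ^ 2) * z ^ 2) := by ext z; ring
  rw [h, integral_add (integrable_const _) h12, integral_add h1 h2,
    integral_const_mul, integral_const_mul, std_integral_id, std_integral_sq,
    integral_const]
  simp

lemma gauss_integral_comp (m : ℝ) (v : ℝ≥0) {g : ℝ → ℝ} (hg : Measurable g) :
    ∫ x, g x ∂(gaussianReal m v) = ∫ z, g (m + Real.sqrt v * z) ∂(gaussianReal 0 1) := by
  rw [gaussianReal_eq_map m v]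
  exact integral_map ((measurable_id'.const_mul _).const_add m).aemeasurable
    hg.aestronglyMeasurable

lemma gauss_integrable_comp (m : ℝ) (v : ℝ≥0) {g : ℝ → ℝ} (hg : Measurable g) :
    Integrable g (gaussianReal m v)
      ↔ Integrable (fun z => g (m + Real.sqrt v * z)) (gaussianReal 0 1) := by
  rw [gaussianReal_eq_map m v]
  exact integrable_map_measure hg.aestronglyMeasurable
    ((measurable_id'.const_mul _).const_add m).aemeasurable

lemma gauss_affine_sq_integrable (m : ℝ) (v : ℝ≥0) (c d : ℝ) :
    Integrable (fun x : ℝ => (c + d * x) ^ 2) (gaussianReal m v) := by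
  rw [gauss_integrable_comp m v (((measurable_id'.const_mul d).const_add c).pow_const 2)]
  have h : (fun z : ℝ => (c + d * (m + Real.sqrt v * z)) ^ 2)
      = fun z => ((c + d * m) + (d * Real.sqrt v) * z) ^ 2 := by ext z; ring
  rw [h]; exact std_affine_sq_integrable _ _

lemma gauss_affine_sq_integral (m : ℝ) (v : ℝ≥0) (c d : ℝ) :
    ∫ x, (c + d * x) ^ 2 ∂(gaussianReal m v) = (c + d * m) ^ 2 + d ^ 2 * v := by
  rw [gauss_integral_comp m v (((measurable_id'.const_mul d).const_add c).pow_const 2)]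
  have h : (fun z : ℝ => (c + d * (m + Real.sqrt v * z)) ^ 2)
      = fun z => ((c + d * m) + (d * Real.sqrt v) * z) ^ 2 := by ext z; ring
  rw [h, std_affine_sq_integral, mul_pow, Real.sq_sqrt v.coe_nonneg]

lemma gauss_affine_integrable (m : ℝ) (v : ℝ≥0) (c d : ℝ) :
    Integrable (fun x : ℝ => c + d * x) (gaussianReal m v) := by
  rw [gauss_integrable_comp m v ((measurable_id'.const_mul d).const_add c)]
  have h : (fun z : ℝ => c + d * (m + Real.sqrt v * z))
      = fun z => (c + d * m) + (d * Real.sqrt v) * z := by ext z; ring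
  rw [h]; exact (integrable_const _).add (std_integrable_id.const_mul _)

lemma gauss_affine_integral (m : ℝ) (v : ℝ≥0) (c d : ℝ) :
    ∫ x, (c + d * x) ∂(gaussianReal m v) = c + d * m := by
  rw [gauss_integral_comp m v ((measurable_id'.const_mul d).const_add c)]
  have h : (fun z : ℝ => c + d * (m + Real.sqrt v * z))
      = fun z => (c + d * m) + (d * Real.sqrt v) * z := by ext z; ring
  have h1 : Integrable (fun z : ℝ => (d * Real.sqrt v) * z) (gaussianReal 0 1) :=
    std_integrable_id.const_mul _
  rw [h, integral_add (integrable_const _) h1, integral_const_mul, std_integral_id,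
    integral_const]
  simp


lemma coupling_proj (γ : Measure (ℝ × ℝ)) {f : ℝ × ℝ → ℝ} (hf : Measurable f) (m : ℝ) (v : ℝ≥0)
    (h : γ.map f = gaussianReal m v) :
    (Integrable (fun p => (f p - m) ^ 2) γ ∧ ∫ p, (f p - m) ^ 2 ∂γ = v) ∧
    (Integrable (fun p => f p - m) γ ∧ ∫ p, (f p - m) ∂γ = 0) := by
  have hg2 : Measurable (fun x : ℝ => (x - m) ^ 2) := (measurable_id.sub_const m).pow_const 2
  have hg1 : Measurable (fun x : ℝ => x - m) := measurable_id.sub_const m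
  have e2 : (fun x : ℝ => (x - m) ^ 2) = fun x => ((-m) + 1 * x) ^ 2 := by ext x; ring
  have e1 : (fun x : ℝ => x - m) = fun x => (-m) + 1 * x := by ext x; ring
  have hi2 : Integrable (fun x : ℝ => (x - m) ^ 2) (γ.map f) := by
    rw [h, e2]; exact gauss_affine_sq_integrable m v _ _
  have hi1 : Integrable (fun x : ℝ => x - m) (γ.map f) := by
    rw [h, e1]; exact gauss_affine_integrable m v _ _
  refine ⟨⟨?_, ?_⟩, ?_, ?_⟩
  · exact (integrable_map_measure hg2.aestronglyMeasurable hf.aemeasurable).mp hi2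
  · rw [← integral_map hf.aemeasurable hg2.aestronglyMeasurable, h, e2,
      gauss_affine_sq_integral]
    simp
  · exact (integrable_map_measure hg1.aestronglyMeasurable hf.aemeasurable).mp hi1
  · rw [← integral_map hf.aemeasurable hg1.aestronglyMeasurable, h, e1, gauss_affine_integral]
    ring

lemma wc_gauss (m₁ m₂ : ℝ) (v₁ v₂ : ℝ≥0) :
    Wc (fun y z => dist y z ^ 2) (gaussianReal m₁ v₁) (gaussianReal m₂ v₂)
      = (m₁ - m₂) ^ 2 + (Real.sqrt v₁ - Real.sqrt v₂) ^ 2 := by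
  set T : ℝ := (m₁ - m₂) ^ 2 + (Real.sqrt v₁ - Real.sqrt v₂) ^ 2 with hT
  have hcostm : Measurable (fun p : ℝ × ℝ => dist p.1 p.2 ^ 2) :=
    (measurable_fst.dist measurable_snd).pow_const 2
  -- membership
  have hmem : T ∈ { r | ∃ γ : Measure (ℝ × ℝ), IsProbabilityMeasure γ ∧
      IsCoupling γ (gaussianReal m₁ v₁) (gaussianReal m₂ v₂) ∧
      r = ∫ p, dist p.1 p.2 ^ 2 ∂γ } := by
    have hφ : Measurable (fun z : ℝ => (m₁ + Real.sqrt v₁ * z, m₂ + Real.sqrt v₂ * z)) :=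
      ((measurable_id'.const_mul _).const_add m₁).prodMk
        ((measurable_id'.const_mul _).const_add m₂)
    refine ⟨(gaussianReal 0 1).map (fun z => (m₁ + Real.sqrt v₁ * z, m₂ + Real.sqrt v₂ * z)),
      Measure.isProbabilityMeasure_map hφ.aemeasurable, ⟨?_, ?_⟩, ?_⟩
    · rw [Measure.map_map measurable_fst hφ]
      exact (gaussianReal_eq_map m₁ v₁).symm
    · rw [Measure.map_map measurable_snd hφ]
      exact (gaussianReal_eq_map m₂ v₂).symm
    · rw [integral_map hφ.aemeasurable hcostm.aestronglyMeasurable]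
      have e : (fun z : ℝ => dist (m₁ + Real.sqrt v₁ * z) (m₂ + Real.sqrt v₂ * z) ^ 2)
          = fun z => ((m₁ - m₂) + (Real.sqrt v₁ - Real.sqrt v₂) * z) ^ 2 := by
        ext z; rw [Real.dist_eq, sq_abs]; ring
      rw [e, std_affine_sq_integral]
  -- lower bound
  have hlow : ∀ x ∈ { r | ∃ γ : Measure (ℝ × ℝ), IsProbabilityMeasure γ ∧
      IsCoupling γ (gaussianReal m₁ v₁) (gaussianReal m₂ v₂) ∧
      r = ∫ p, dist p.1 p.2 ^ 2 ∂γ }, T ≤ x := by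
    rintro x ⟨γ, hprob, ⟨hfst, hsnd⟩, rfl⟩
    obtain ⟨⟨hA, hEA⟩, hu, hEu⟩ := coupling_proj γ measurable_fst m₁ v₁ hfst
    obtain ⟨⟨hB, hEB⟩, hw, hEw⟩ := coupling_proj γ measurable_snd m₂ v₂ hsnd
    have hABsum : Integrable (fun p : ℝ × ℝ => (p.1 - m₁) ^ 2 + (p.2 - m₂) ^ 2) γ := hA.add hB
    have hprodm : AEStronglyMeasurable (fun p : ℝ × ℝ => (p.1 - m₁) * (p.2 - m₂)) γ :=
      (((measurable_fst.sub_const m₁).mul (measurable_snd.sub_const m₂))).aestronglyMeasurable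
    have hprod : Integrable (fun p : ℝ × ℝ => (p.1 - m₁) * (p.2 - m₂)) γ := by
      refine Integrable.mono' hABsum hprodm (Filter.Eventually.of_forall fun p => ?_)
      rw [Real.norm_eq_abs, abs_mul]
      nlinarith [sq_nonneg (|p.1 - m₁| - |p.2 - m₂|), sq_abs (p.1 - m₁), sq_abs (p.2 - m₂),
        abs_nonneg (p.1 - m₁), abs_nonneg (p.2 - m₂)]
    set C : ℝ := ∫ p, (p.1 - m₁) * (p.2 - m₂) ∂γ with hC
    have hCS : C ≤ Real.sqrt v₁ * Real.sqrt v₂ := by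
      have key : ∀ ε ∈ Ioi (0:ℝ),
          C ≤ Real.sqrt ((v₁ : ℝ) + ε) * Real.sqrt ((v₂ : ℝ) + ε) := by
        intro ε hε
        have hε' : (0:ℝ) < ε := hε
        set s1 : ℝ := Real.sqrt ((v₁ : ℝ) + ε) with hs1def
        set s2 : ℝ := Real.sqrt ((v₂ : ℝ) + ε) with hs2def
        have hs1 : 0 < s1 := Real.sqrt_pos.2 (by positivity)
        have hs2 : 0 < s2 := Real.sqrt_pos.2 (by positivity)
        have hs1sq : s1 ^ 2 = (v₁ : ℝ) + ε := Real.sq_sqrt (by positivity)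
        have hs2sq : s2 ^ 2 = (v₂ : ℝ) + ε := Real.sq_sqrt (by positivity)
        set t : ℝ := s2 / s1 with htdef
        have ht : 0 < t := div_pos hs2 hs1
        have hpt : ∀ a b : ℝ, 2 * (a * b) ≤ t * a ^ 2 + t⁻¹ * b ^ 2 := by
          intro a b
          have h0 : 0 ≤ t⁻¹ * (t * a - b) ^ 2 := by positivity
          have h1 : t⁻¹ * (t * a - b) ^ 2 = t * a ^ 2 - 2 * (a * b) + t⁻¹ * b ^ 2 := by
            field_simp; ring
          linarith [h1 ▸ h0]
        have hi1 : Integrable (fun p : ℝ × ℝ => t * (p.1 - m₁) ^ 2) γ := hA.const_mul t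
        have hi2 : Integrable (fun p : ℝ × ℝ => t⁻¹ * (p.2 - m₂) ^ 2) γ := hB.const_mul t⁻¹
        have hi12 : Integrable (fun p : ℝ × ℝ => t * (p.1 - m₁) ^ 2 + t⁻¹ * (p.2 - m₂) ^ 2) γ :=
          hi1.add hi2
        have hmono := integral_mono (hprod.const_mul 2) hi12 (fun p => hpt _ _)
        rw [integral_const_mul, integral_add hi1 hi2, integral_const_mul, integral_const_mul,
          hEA, hEB] at hmono
        have h1 : t * (v₁ : ℝ) ≤ s1 * s2 := by
          have := mul_le_mul_of_nonneg_left (by linarith [hs1sq] : (v₁ : ℝ) ≤ s1 ^ 2) ht.le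
          calc t * (v₁ : ℝ) ≤ t * s1 ^ 2 := this
            _ = s1 * s2 := by rw [htdef]; field_simp
        have h2 : t⁻¹ * (v₂ : ℝ) ≤ s1 * s2 := by
          have := mul_le_mul_of_nonneg_left (by linarith [hs2sq] : (v₂ : ℝ) ≤ s2 ^ 2)
            (inv_nonneg.2 ht.le)
          calc t⁻¹ * (v₂ : ℝ) ≤ t⁻¹ * s2 ^ 2 := this
            _ = s1 * s2 := by rw [htdef]; field_simp
        linarith
      have htends : Tendsto (fun ε : ℝ => Real.sqrt ((v₁ : ℝ) + ε) * Real.sqrt ((v₂ : ℝ) + ε))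
          (𝓝[>] (0:ℝ)) (𝓝 (Real.sqrt v₁ * Real.sqrt v₂)) := by
        have hc : Continuous (fun ε : ℝ => Real.sqrt ((v₁ : ℝ) + ε) * Real.sqrt ((v₂ : ℝ) + ε)) :=
          ((continuous_const.add continuous_id).sqrt).mul
            ((continuous_const.add continuous_id).sqrt)
        have h1 := (hc.continuousAt (x := (0:ℝ))).tendsto
        have h2 : Tendsto (fun ε : ℝ => Real.sqrt ((v₁ : ℝ) + ε) * Real.sqrt ((v₂ : ℝ) + ε))
            (𝓝[>] (0:ℝ)) (𝓝 (Real.sqrt ((v₁:ℝ) + 0) * Real.sqrt ((v₂:ℝ) + 0))) :=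
          h1.mono_left nhdsWithin_le_nhds
        simpa using h2
      exact ge_of_tendsto htends (eventually_nhdsWithin_of_forall key)
    -- expansion
    have hP2a : Integrable (fun p : ℝ × ℝ => (2 * (m₁ - m₂)) * (p.1 - m₁)) γ := hu.const_mul _
    have hP2b : Integrable (fun p : ℝ × ℝ => (2 * (m₁ - m₂)) * (p.2 - m₂)) γ := hw.const_mul _
    have hP2c : Integrable (fun p : ℝ × ℝ => 2 * ((p.1 - m₁) * (p.2 - m₂))) γ := hprod.const_mul 2
    have hP2ab : Integrable (fun p : ℝ × ℝ =>
        (2 * (m₁ - m₂)) * (p.1 - m₁) - (2 * (m₁ - m₂)) * (p.2 - m₂)) γ := hP2a.sub hP2b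
    have hP2 : Integrable (fun p : ℝ × ℝ =>
        (2 * (m₁ - m₂)) * (p.1 - m₁) - (2 * (m₁ - m₂)) * (p.2 - m₂)
          - 2 * ((p.1 - m₁) * (p.2 - m₂))) γ := hP2ab.sub hP2c
    have hP12 : Integrable (fun p : ℝ × ℝ => ((p.1 - m₁) ^ 2 + (p.2 - m₂) ^ 2)
        + ((2 * (m₁ - m₂)) * (p.1 - m₁) - (2 * (m₁ - m₂)) * (p.2 - m₂)
          - 2 * ((p.1 - m₁) * (p.2 - m₂)))) γ := hABsum.add hP2
    have expand : (fun p : ℝ × ℝ => dist p.1 p.2 ^ 2)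
        = fun p => (((p.1 - m₁) ^ 2 + (p.2 - m₂) ^ 2)
          + ((2 * (m₁ - m₂)) * (p.1 - m₁) - (2 * (m₁ - m₂)) * (p.2 - m₂)
            - 2 * ((p.1 - m₁) * (p.2 - m₂)))) + (m₁ - m₂) ^ 2 := by
      ext p; rw [Real.dist_eq, sq_abs]; ring
    have hval : ∫ p, dist p.1 p.2 ^ 2 ∂γ
        = ((v₁ : ℝ) + (v₂ : ℝ) + ((2 * (m₁ - m₂)) * 0 - (2 * (m₁ - m₂)) * 0 - 2 * C))
          + (m₁ - m₂) ^ 2 := by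
      rw [expand, integral_add hP12 (integrable_const _), integral_add hABsum hP2,
        integral_add hA hB, integral_sub hP2ab hP2c, integral_sub hP2a hP2b,
        integral_const_mul, integral_const_mul, integral_const_mul, hEA, hEB, hEu, hEw,
        integral_const]
      simp
      rfl
    rw [hval, hT]
    have hv1 : Real.sqrt (v₁ : ℝ) ^ 2 = (v₁ : ℝ) := Real.sq_sqrt v₁.coe_nonneg
    have hv2 : Real.sqrt (v₂ : ℝ) ^ 2 = (v₂ : ℝ) := Real.sq_sqrt v₂.coe_nonneg
    nlinarith [hCS, hv1, hv2]
  exact le_antisymm (csInf_le ⟨T, hlow⟩ hmem) (le_csInf ⟨T, hmem⟩ hlow)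


lemma W2_sq_gauss (m₁ m₂ : ℝ) (v₁ v₂ : ℝ≥0) :
    (W2 (gaussianReal m₁ v₁) (gaussianReal m₂ v₂)) ^ 2
      = (m₁ - m₂) ^ 2 + (Real.sqrt v₁ - Real.sqrt v₂) ^ 2 := by
  rw [W2, wc_gauss, Real.sq_sqrt (by positivity)]


end AuxLemmas

theorem gaussian_wasserstein_correlation_numerator
    (a₁ a₂ s₁ s₂ r : ℝ) (hs₁ : 0 < s₁) (hs₂ : 0 < s₂) (hr : r ∈ Set.Icc (-1 : ℝ) 1)
    (pi : Measure (ℝ × ℝ)) [IsProbabilityMeasure pi]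
    (hdis : IsDisintegration pi (gaussianReal a₁ (Real.toNNReal (s₁ ^ 2)))
      (fun x₁ => gaussianReal (a₂ + (s₂ / s₁) * r * (x₁ - a₁))
        (Real.toNNReal ((1 - r ^ 2) * s₂ ^ 2)))) :
    ∫ x₁, (W2 (gaussianReal (a₂ + (s₂ / s₁) * r * (x₁ - a₁))
          (Real.toNNReal ((1 - r ^ 2) * s₂ ^ 2)))
        (gaussianReal a₂ (Real.toNNReal (s₂ ^ 2)))) ^ 2
        ∂(gaussianReal a₁ (Real.toNNReal (s₁ ^ 2))) =
      2 * s₂ ^ 2 * (1 - Real.sqrt (1 - r ^ 2)) := by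
  have h1r : (0:ℝ) ≤ 1 - r ^ 2 := by
    have h1 := hr.1; have h2 := hr.2; nlinarith
  set q : ℝ := Real.sqrt (1 - r ^ 2) with hq
  have hqsq : q ^ 2 = 1 - r ^ 2 := Real.sq_sqrt h1r
  set d : ℝ := (s₂ / s₁) * r with hd
  set Cst : ℝ := (q * s₂ - s₂) ^ 2 with hCst
  have hcoe1 : ((Real.toNNReal ((1 - r ^ 2) * s₂ ^ 2)) : ℝ) = (1 - r ^ 2) * s₂ ^ 2 :=
    Real.coe_toNNReal _ (by positivity)
  have hcoe2 : ((Real.toNNReal (s₂ ^ 2)) : ℝ) = s₂ ^ 2 := Real.coe_toNNReal _ (by positivity)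
  have hcoe3 : ((Real.toNNReal (s₁ ^ 2)) : ℝ) = s₁ ^ 2 := Real.coe_toNNReal _ (by positivity)
  have hsq1 : Real.sqrt ((Real.toNNReal ((1 - r ^ 2) * s₂ ^ 2)) : ℝ) = q * s₂ := by
    rw [hcoe1, Real.sqrt_mul h1r, Real.sqrt_sq hs₂.le]
  have hsq2 : Real.sqrt ((Real.toNNReal (s₂ ^ 2)) : ℝ) = s₂ := by
    rw [hcoe2, Real.sqrt_sq hs₂.le]
  have hint : ∀ x₁ : ℝ, (W2 (gaussianReal (a₂ + (s₂ / s₁) * r * (x₁ - a₁))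
          (Real.toNNReal ((1 - r ^ 2) * s₂ ^ 2)))
        (gaussianReal a₂ (Real.toNNReal (s₂ ^ 2)))) ^ 2
      = ((-(d * a₁)) + d * x₁) ^ 2 + Cst := by
    intro x₁
    rw [W2_sq_gauss, hsq1, hsq2]
    congr 1
    · ring
  have hfuneq : (fun x₁ : ℝ => (W2 (gaussianReal (a₂ + (s₂ / s₁) * r * (x₁ - a₁))
          (Real.toNNReal ((1 - r ^ 2) * s₂ ^ 2)))
        (gaussianReal a₂ (Real.toNNReal (s₂ ^ 2)))) ^ 2)
      = fun x₁ => ((-(d * a₁)) + d * x₁) ^ 2 + Cst := by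
    ext x₁; exact hint x₁
  rw [hfuneq, integral_add (gauss_affine_sq_integrable _ _ _ _) (integrable_const _),
    gauss_affine_sq_integral, integral_const]
  simp only [measure_univ, ENNReal.toReal_one, probReal_univ, one_smul, hcoe3]
  have hd2 : d ^ 2 * s₁ ^ 2 = s₂ ^ 2 * r ^ 2 := by
    rw [hd]; field_simp
  have hz : (-(d * a₁) + d * a₁) = 0 := by ring
  rw [hz]
  rw [hd2, hCst]
  linear_combination (s₂ ^ 2) * hqsq


end
end

section
/- For a coupling π of μ, ν on ℝ with disintegration x ↦ π_x, letting F_ρ denote cumulative distribution functions: ∫∫ (π_x([y,∞)) − ν([y,∞)))² dμ(x) dν(y) = ∫ ∫₀¹ (F_{π̃_x}(u) − u)² du dμ(x), where π̃_x = (F_ν)_# π_x, provided ν is non-atomic (so F_ν∘F_ν^{-1} = id a.e. on [0,1]). -/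
open MeasureTheory ProbabilityTheory Set

noncomputable section

section ChatAux
open Filter

variable (nu : Measure ℝ) [IsProbabilityMeasure nu] [NullSingletonClass nu]

lemma cdf_cont : Continuous (cdf nu) := by
  rw [continuous_iff_continuousAt]
  intro x
  rw [(cdf nu).mono.continuousAt_iff_leftLim_eq_rightLim, (cdf nu).rightLim_eq]
  have h := (cdf nu).measure_singleton x
  rw [measure_cdf, measure_singleton] at h
  have h1 : cdf nu x - Function.leftLim (cdf nu) x ≤ 0 := by
    by_contra hc
    push_neg at hc
    rw [eq_comm, ENNReal.ofReal_eq_zero] at h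
    linarith
  have h2 : Function.leftLim (cdf nu) x ≤ cdf nu x := (cdf nu).mono.leftLim_le le_rfl
  linarith

lemma null_of_null_cov (S : Set ℝ) (J : ℝ → Set ℝ) (hJmono : ∀ a b, a ≤ b → J a ⊆ J b)
    (hmem : ∀ z ∈ S, z ∈ J z) (hnull : ∀ z ∈ S, nu (J z) = 0) : nu S = 0 := by
  rcases S.eq_empty_or_nonempty with rfl | hne
  · simp
  by_cases hbdd : BddAbove S
  · set c := sSup S with hc
    have hcover : S ⊆ {c} ∪ ⋃ q : ℚ, if (q : ℝ) < c then J q else (∅ : Set ℝ) := by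
      intro v hv
      rcases eq_or_lt_of_le (le_csSup hbdd hv) with h | h
      · exact Or.inl (by simp [h, hc])
      · obtain ⟨q, hq1, hq2⟩ := exists_rat_btwn h
        refine Or.inr (mem_iUnion.2 ⟨q, ?_⟩)
        rw [if_pos hq2]
        exact hJmono v q hq1.le (hmem v hv)
    refine measure_mono_null hcover (measure_union_null (measure_singleton c) ?_)
    refine measure_iUnion_null fun q => ?_
    split_ifs with h
    · obtain ⟨z, hz, hqz⟩ := exists_lt_of_lt_csSup hne h
      exact measure_mono_null (hJmono q z hqz.le) (hnull z hz)
    · simp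
  · have hcover : S ⊆ ⋃ q : ℚ, J q := by
      intro v hv
      obtain ⟨q, hq⟩ := exists_rat_gt v
      exact mem_iUnion.2 ⟨q, hJmono v q hq.le (hmem v hv)⟩
    refine measure_mono_null hcover (measure_iUnion_null fun q => ?_)
    rcases not_bddAbove_iff.1 hbdd (q : ℝ) with ⟨z, hz, hqz⟩
    exact measure_mono_null (hJmono q z hqz.le) (hnull z hz)

lemma setLe_null_components {y : ℝ} :
    nu ({z | cdf nu z ≤ cdf nu y} \ Iic y) = 0 := by
  refine null_of_null_cov nu _ (fun z => Ioc y z) (fun a b hab => Ioc_subset_Ioc_right hab)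
    (fun z hz => ⟨lt_of_not_ge hz.2, le_rfl⟩) (fun z hz => ?_)
  have hzy : y < z := lt_of_not_ge hz.2
  have heq : cdf nu z = cdf nu y := le_antisymm hz.1 (monotone_cdf nu hzy.le)
  have : nu (Ioc y z) = (cdf nu).measure (Ioc y z) := by rw [measure_cdf]
  rw [this, StieltjesFunction.measure_Ioc, heq, sub_self, ENNReal.ofReal_zero]

lemma map_cdf_eq_uniform : nu.map (cdf nu) = volume.restrict (Ioo (0:ℝ) 1) := by
  have hFm : Measurable (cdf nu) := (cdf_cont nu).measurable
  have hfin : IsFiniteMeasure (volume.restrict (Ioo (0:ℝ) 1)) := by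
    constructor
    rw [Measure.restrict_apply_univ, Real.volume_Ioo]
    simp
  have : IsProbabilityMeasure (nu.map (cdf nu)) := Measure.isProbabilityMeasure_map hFm.aemeasurable
  refine Measure.ext_of_Iic _ _ (fun u => ?_)
  rw [Measure.map_apply hFm measurableSet_Iic, Measure.restrict_apply measurableSet_Iic]
  have hpre : cdf nu ⁻¹' Iic u = {z | cdf nu z ≤ u} := rfl
  rcases le_or_gt u 0 with hu0 | hu0
  · rcases lt_or_eq_of_le hu0 with hu0' | rfl
    · have h1 : {z | cdf nu z ≤ u} = ∅ := by
        ext z; simp only [mem_setOf_eq, mem_empty_iff_false, iff_false, not_le]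
        exact lt_of_lt_of_le hu0' (cdf_nonneg nu z)
      have h2 : Iic u ∩ Ioo (0:ℝ) 1 = ∅ := by
        ext z; simp only [mem_inter_iff, mem_Iic, mem_Ioo, mem_empty_iff_false, iff_false]
        rintro ⟨h, h0, _⟩; linarith
      rw [hpre, h1, h2]; simp
    · have h2 : Iic (0:ℝ) ∩ Ioo (0:ℝ) 1 = ∅ := by
        ext z; simp only [mem_inter_iff, mem_Iic, mem_Ioo, mem_empty_iff_false, iff_false]
        rintro ⟨h, h0, _⟩; linarith
      rw [hpre, h2, measure_empty]
      refine null_of_null_cov nu _ (fun z => Iic z) (fun a b hab => Iic_subset_Iic.2 hab)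
        (fun z _ => mem_Iic.2 le_rfl) (fun z hz => ?_)
      have : cdf nu z = 0 := le_antisymm hz (cdf_nonneg nu z)
      rw [← ofReal_cdf nu z, this, ENNReal.ofReal_zero]
  · rcases lt_or_ge u 1 with hu1 | hu1
    · -- 0 < u < 1 : find y with cdf y = u
      obtain ⟨a, ha⟩ : ∃ a, cdf nu a < u :=
        ((tendsto_cdf_atBot nu).eventually_lt_const hu0).exists
      obtain ⟨b, hb⟩ : ∃ b, u < cdf nu b :=
        ((tendsto_cdf_atTop nu).eventually_const_lt hu1).exists
      have hab : a ≤ b := by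
        by_contra hc
        push_neg at hc
        exact absurd (monotone_cdf nu hc.le) (by linarith)
      obtain ⟨y, -, hy⟩ := intermediate_value_Icc hab (cdf_cont nu).continuousOn
        (mem_Icc.2 ⟨ha.le, hb.le⟩)
      have hsplit : {z | cdf nu z ≤ u} = Iic y ∪ ({z | cdf nu z ≤ cdf nu y} \ Iic y) := by
        rw [← hy]
        ext z
        simp only [mem_union, mem_setOf_eq, mem_diff, mem_Iic]
        constructor
        · intro h; by_cases hzy : z ≤ y
          · exact Or.inl hzy
          · exact Or.inr ⟨h, hzy⟩
        · rintro (h | h)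
          · exact monotone_cdf nu h
          · exact h.1
      have hE := setLe_null_components nu (y := y)
      have hval : nu ({z | cdf nu z ≤ u}) = ENNReal.ofReal u := by
        rw [hsplit]
        have h1 : nu (Iic y ∪ ({z | cdf nu z ≤ cdf nu y} \ Iic y)) = nu (Iic y) :=
          le_antisymm ((measure_union_le _ _).trans (by rw [hE, add_zero]))
            (measure_mono subset_union_left)
        rw [h1, ← ofReal_cdf nu y, hy]
      have h2 : Iic u ∩ Ioo (0:ℝ) 1 = Ioc (0:ℝ) u := by
        ext z
        simp only [mem_inter_iff, mem_Iic, mem_Ioo, mem_Ioc]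
        constructor
        · rintro ⟨h, h0, _⟩; exact ⟨h0, h⟩
        · rintro ⟨h0, h⟩; exact ⟨h, h0, lt_of_le_of_lt h hu1⟩
      rw [hpre, hval, h2, Real.volume_Ioc, sub_zero]
    · have h1 : {z | cdf nu z ≤ u} = univ := by
        ext z; simp only [mem_setOf_eq, mem_univ, iff_true]
        exact (cdf_le_one nu z).trans hu1
      have h2 : Iic u ∩ Ioo (0:ℝ) 1 = Ioo (0:ℝ) 1 := by
        refine inter_eq_self_of_subset_right (fun z hz => le_trans hz.2.le hu1)
      rw [hpre, h1, h2, Real.volume_Ioo, measure_univ]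
      norm_num

end ChatAux

theorem chatterjee_change_of_variables
    (mu nu : Measure ℝ) [IsProbabilityMeasure mu] [IsProbabilityMeasure nu] [NullSingletonClass nu]
    (pi : Measure (ℝ × ℝ)) [IsProbabilityMeasure pi]
    (hpi : IsCoupling pi mu nu)
    (K : ℝ → Measure ℝ) (hK : IsDisintegration pi mu K) :
    ∫ x, ∫ y, (((K x) (Set.Ici y)).toReal - (nu (Set.Ici y)).toReal) ^ 2 ∂nu ∂mu =
      ∫ x, (∫ u in Set.Ioo (0 : ℝ) 1,
        ((((K x).map (fun y => (nu (Set.Iic y)).toReal)) (Set.Iic u)).toReal - u) ^ 2) ∂mu := by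
  obtain ⟨hKmeas, hKprob, hKdis⟩ := hK
  set F : ℝ → ℝ := fun y => (nu (Set.Iic y)).toReal with hFdef
  have hFcdf : F = cdf nu := funext fun y => (cdf_eq_real nu y).symm
  have hFm : Measurable F := by rw [hFcdf]; exact (cdf_cont nu).measurable
  have hFmono : Monotone F := by rw [hFcdf]; exact monotone_cdf nu
  have hmap : nu.map F = volume.restrict (Ioo (0:ℝ) 1) := by
    rw [hFcdf]; exact map_cdf_eq_uniform nu
  set N : Set ℝ := ⋃ q : ℚ, F ⁻¹' {F q} with hN
  have hNmeas : MeasurableSet N := MeasurableSet.iUnion fun q => hFm (measurableSet_singleton _)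
  have hNnull : nu N = 0 := by
    refine measure_iUnion_null fun q => ?_
    have h1 : nu (F ⁻¹' {F q}) = (nu.map F) {F q} :=
      (Measure.map_apply hFm (measurableSet_singleton _)).symm
    rw [h1, hmap, Measure.restrict_apply (measurableSet_singleton _)]
    exact measure_mono_null inter_subset_left (Real.volume_singleton)
  have hmargin : ∫⁻ x, K x N ∂mu = 0 := by
    have h2 := hKdis univ N MeasurableSet.univ hNmeas
    rw [Measure.restrict_univ] at h2
    rw [← h2]
    have hprod : (univ : Set ℝ) ×ˢ N = Prod.snd ⁻¹' N := by ext p; simp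
    rw [hprod, ← Measure.map_apply measurable_snd hNmeas, hpi.2, hNnull]
  have hae : ∀ᵐ x ∂mu, K x N = 0 := by
    have hm : Measurable fun x => K x N := (Measure.measurable_coe hNmeas).comp hKmeas
    exact (lintegral_eq_zero_iff hm).1 hmargin
  refine integral_congr_ae ?_
  filter_upwards [hae] with x hx
  haveI := hKprob x
  set κ := K x with hκ
  haveI : IsProbabilityMeasure (κ.map F) := Measure.isProbabilityMeasure_map hFm.aemeasurable
  have hmono : Monotone fun u => ((κ.map F) (Iic u)).toReal := fun a b hab =>
    ENNReal.toReal_mono (measure_ne_top _ _) (measure_mono (Iic_subset_Iic.2 hab))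
  have hhm : Measurable fun u : ℝ => (((κ.map F) (Iic u)).toReal - u) ^ 2 :=
    (hmono.measurable.sub measurable_id).pow_const 2
  -- a.e. singleton nullity for κ
  have hcnt : Set.Countable {y : ℝ | 0 < κ {y}} := by
    have hd : Pairwise (Function.onFun Disjoint fun y : ℝ => ({y} : Set ℝ)) := by
      intro a b hab
      simp only [Function.onFun, disjoint_singleton]
      exact hab
    exact MeasureTheory.Measure.countable_meas_pos_of_disjoint_iUnion (μ := κ)
      (fun y : ℝ => measurableSet_singleton y) hd
  have hκae : ∀ᵐ y ∂nu, κ {y} = 0 := by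
    rw [ae_iff]
    refine measure_mono_null (fun y hy => ?_) (hcnt.measure_zero nu)
    simp only [mem_setOf_eq] at hy ⊢
    exact pos_iff_ne_zero.2 hy
  calc ∫ y, ((κ (Ici y)).toReal - (nu (Ici y)).toReal) ^ 2 ∂nu
      = ∫ y, (((κ.map F) (Iic (F y))).toReal - F y) ^ 2 ∂nu := by
        refine integral_congr_ae ?_
        filter_upwards [hκae] with y hy
        have hset : (κ.map F) (Iic (F y)) = κ (Iio y) := by
          rw [Measure.map_apply hFm measurableSet_Iic]
          have hsub : F ⁻¹' Iic (F y) \ Iic y ⊆ N := by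
            intro z hz
            have hyz : y < z := lt_of_not_ge hz.2
            have hFz : F z = F y := le_antisymm hz.1 (hFmono hyz.le)
            obtain ⟨q, hq1, hq2⟩ := exists_rat_btwn hyz
            have hFq : F q = F y := le_antisymm (by rw [← hFz]; exact hFmono hq2.le)
              (hFmono hq1.le)
            exact mem_iUnion.2 ⟨q, by simp [hFz, hFq]⟩
          have hIic : κ (F ⁻¹' Iic (F y)) = κ (Iic y) := by
            have hcov : F ⁻¹' Iic (F y) = Iic y ∪ (F ⁻¹' Iic (F y) \ Iic y) := by
              rw [union_diff_self]
              exact (union_eq_self_of_subset_left (fun z hz => hFmono hz)).symm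
            rw [hcov]
            refine le_antisymm ((measure_union_le _ _).trans ?_)
              (measure_mono subset_union_left)
            rw [measure_mono_null hsub hx, add_zero]
          rw [hIic]
          have hIio : Iic y = Iio y ∪ {y} := by rw [Iio_union_right]
          rw [hIio]
          refine le_antisymm ((measure_union_le _ _).trans (by rw [hy, add_zero]))
            (measure_mono subset_union_left)
        rw [hset]
        have hκIci : (κ (Ici y)).toReal = 1 - (κ (Iio y)).toReal := by
          rw [← compl_Iio, measure_compl measurableSet_Iio (measure_ne_top _ _), measure_univ,
            ENNReal.toReal_sub_of_le prob_le_one ENNReal.one_ne_top, ENNReal.toReal_one]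
        have hνIci : (nu (Ici y)).toReal = 1 - (nu (Iio y)).toReal := by
          rw [← compl_Iio, measure_compl measurableSet_Iio (measure_ne_top _ _), measure_univ,
            ENNReal.toReal_sub_of_le prob_le_one ENNReal.one_ne_top, ENNReal.toReal_one]
        have hνIio : nu (Iio y) = nu (Iic y) := measure_congr (Iio_ae_eq_Iic)
        have hFy : F y = (nu (Iio y)).toReal := by rw [hνIio]
        rw [hκIci, hνIci, hFy]
        ring
    _ = ∫ u, (((κ.map F) (Iic u)).toReal - u) ^ 2 ∂(nu.map F) :=
        (integral_map hFm.aemeasurable hhm.aestronglyMeasurable).symm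
    _ = ∫ u in Ioo (0:ℝ) 1, (((κ.map F) (Iic u)).toReal - u) ^ 2 := by rw [hmap]



end
end

section
/- Chatterjee-type two-sided bound: with T = ∫∫(F_{π_x}(y) − F_ν(y))² dν(y) dμ(x) and A = ∫ W(π̃_x, U[0,1]) dμ(x) where π̃_x = (F_ν)_#π_x and U[0,1] is the uniform distribution on [0,1], one has A² ≤ T ≤ A (using that for measures on [0,1], W(ρ, U[0,1]) = ∫₀¹ |F_ρ(u) − u| du). -/
open MeasureTheory ProbabilityTheory Set

noncomputable section

set_option linter.unusedSectionVars false
namespace ChatAux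
open scoped ENNReal
open Filter
set_option maxHeartbeats 1000000


def cdfR (ρ : Measure ℝ) (t : ℝ) : ℝ := (ρ (Iic t)).toReal
variable {ρ : Measure ℝ} [IsProbabilityMeasure ρ]
lemma cdfR_eq (t : ℝ) : cdfR ρ t = cdf ρ t := (cdf_eq_real ρ t).symm
lemma cdfR_mono : Monotone (cdfR ρ) := fun a b hab => by
  rw [cdfR_eq, cdfR_eq]; exact monotone_cdf ρ hab
lemma cdfR_nonneg (t : ℝ) : 0 ≤ cdfR ρ t := ENNReal.toReal_nonneg
lemma cdfR_le_one (t : ℝ) : cdfR ρ t ≤ 1 := by rw [cdfR_eq]; exact cdf_le_one ρ t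
lemma measurable_cdfR : Measurable (cdfR ρ) := cdfR_mono.measurable
lemma ofReal_cdfR (t : ℝ) : ENNReal.ofReal (cdfR ρ t) = ρ (Iic t) := by
  rw [cdfR_eq]; exact ofReal_cdf ρ t

lemma tendsto_cdfR_atBot : Tendsto (cdfR ρ) atBot (nhds 0) := by
  have := tendsto_cdf_atBot ρ
  refine this.congr fun t => (cdfR_eq t).symm
lemma tendsto_cdfR_atTop : Tendsto (cdfR ρ) atTop (nhds 1) := by
  have := tendsto_cdf_atTop ρ
  refine this.congr fun t => (cdfR_eq t).symm
lemma continuous_cdfR [NullSingletonClass ρ] : Continuous (cdfR ρ) := by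
  have h : Continuous (cdf ρ) := by
    rw [continuous_iff_continuousAt]
    intro x
    rw [(monotone_cdf ρ).continuousAt_iff_leftLim_eq_rightLim]
    have hr : Function.rightLim (cdf ρ) x = cdf ρ x := (cdf ρ).rightLim_eq x
    have hs : (cdf ρ).measure {x} = ENNReal.ofReal (cdf ρ x - Function.leftLim (cdf ρ) x) :=
      (cdf ρ).measure_singleton x
    rw [measure_cdf ρ, measure_singleton] at hs
    have h0 : cdf ρ x - Function.leftLim (cdf ρ) x ≤ 0 := by
      by_contra h
      push_neg at h
      rw [eq_comm, ENNReal.ofReal_eq_zero] at hs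
      linarith
    have h1 : Function.leftLim (cdf ρ) x ≤ cdf ρ x := (monotone_cdf ρ).leftLim_le le_rfl
    rw [hr]
    linarith
  have : cdfR ρ = fun t => cdf ρ t := funext fun t => cdfR_eq t
  rw [this]
  exact h


/-- probability integral transform -/
lemma pit (ν : Measure ℝ) [IsProbabilityMeasure ν] [NullSingletonClass ν] :
    ν.map (cdfR ν) = volume.restrict (Icc (0:ℝ) 1) := by
  have hfin : IsFiniteMeasure (ν.map (cdfR ν)) := by
    constructor
    rw [Measure.map_apply measurable_cdfR MeasurableSet.univ]
    simp [measure_univ]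
  refine Measure.ext_of_Iic _ _ (fun a => ?_)
  rw [Measure.map_apply measurable_cdfR measurableSet_Iic,
    Measure.restrict_apply measurableSet_Iic]
  rcases lt_or_ge a 0 with ha | ha
  · have h1 : cdfR ν ⁻¹' Iic a = ∅ := by
      ext y; simp only [mem_preimage, mem_Iic, mem_empty_iff_false, iff_false, not_le]
      exact lt_of_lt_of_le ha (cdfR_nonneg y)
    have h2 : Iic a ∩ Icc (0:ℝ) 1 = ∅ := by
      ext u; simp only [mem_inter_iff, mem_Iic, mem_Icc, mem_empty_iff_false, iff_false]
      rintro ⟨h, h0, -⟩; linarith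
    rw [h1, h2, measure_empty, measure_empty]
  rcases le_or_gt 1 a with ha1 | ha1
  · have h1 : cdfR ν ⁻¹' Iic a = univ := by
      ext y; simp only [mem_preimage, mem_Iic, mem_univ, iff_true]
      exact le_trans (cdfR_le_one y) ha1
    have h2 : Iic a ∩ Icc (0:ℝ) 1 = Icc 0 1 := by
      ext u; simp only [mem_inter_iff, mem_Iic, mem_Icc, and_iff_right_iff_imp]
      rintro ⟨h0, h1'⟩; linarith
    rw [h1, h2, measure_univ, Real.volume_Icc]
    norm_num
  -- case 0 ≤ a < 1
  have hS : Iic a ∩ Icc (0:ℝ) 1 = Icc 0 a := by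
    ext u; simp only [mem_inter_iff, mem_Iic, mem_Icc]
    constructor
    · rintro ⟨h, h0, -⟩; exact ⟨h0, h⟩
    · rintro ⟨h0, h⟩; exact ⟨h, h0, le_trans h ha1.le⟩
  rw [hS, Real.volume_Icc, sub_zero]
  set S := cdfR ν ⁻¹' Iic a with hSdef
  rcases eq_empty_or_nonempty S with hemp | hne
  · -- then a must be 0 (if a>0 contradiction with tendsto atBot)
    rw [hemp, measure_empty]
    rcases eq_or_lt_of_le ha with rfl | hapos
    · simp
    · exfalso
      have := tendsto_cdfR_atBot (ρ := ν)
      have hev : ∀ᶠ y in atBot, cdfR ν y < a := this.eventually_lt_const hapos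
      obtain ⟨y, hy⟩ := hev.exists
      have hyS : y ∈ S := by simp only [hSdef, mem_preimage, mem_Iic]; exact hy.le
      rw [hemp] at hyS; exact hyS
  · have hbdd : BddAbove S := by
      have := tendsto_cdfR_atTop (ρ := ν)
      have hev : ∀ᶠ y in atTop, a < cdfR ν y := this.eventually_const_lt ha1
      obtain ⟨y, hy⟩ := hev.exists
      obtain ⟨y0, hy0⟩ := (eventually_atTop.mp hev)
      refine ⟨y0, fun z hz => ?_⟩
      by_contra hzy
      push_neg at hzy
      have : a < cdfR ν z := hy0 z hzy.le
      exact absurd hz (by simp [hSdef, mem_preimage, mem_Iic]; linarith)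
    have hclosed : IsClosed S := IsClosed.preimage continuous_cdfR isClosed_Iic
    have hcmem : sSup S ∈ S := hclosed.csSup_mem hne hbdd
    set c := sSup S with hc
    have hSIic : S = Iic c := by
      ext z
      constructor
      · intro hz; exact le_csSup hbdd hz
      · intro hz
        simp only [hSdef, mem_preimage, mem_Iic] at *
        exact le_trans (cdfR_mono hz) hcmem
    have hca : cdfR ν c = a := by
      refine le_antisymm hcmem ?_
      by_contra hlt
      push_neg at hlt
      have hcont : ContinuousAt (cdfR ν) c := continuous_cdfR.continuousAt
      have hev : ∀ᶠ z in nhds c, cdfR ν z < a := hcont.eventually_lt_const hlt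
      have hev' : ∀ᶠ z in nhdsWithin c (Ioi c), cdfR ν z < a :=
        hev.filter_mono nhdsWithin_le_nhds
      obtain ⟨z, hz1, hz2⟩ := (hev'.and self_mem_nhdsWithin).exists
      have : z ∈ S := by simp [hSdef, mem_preimage, mem_Iic]; exact hz1.le
      rw [hSIic] at this
      exact absurd this (not_le.mpr hz2)
    rw [hSIic, ofReal_cdfR c |>.symm, hca]


lemma cdfR_right_continuous (x : ℝ) : ContinuousWithinAt (cdfR ρ) (Ici x) x := by
  have h := (cdf ρ).right_continuous x
  have : cdfR ρ = fun t => cdf ρ t := funext fun t => cdfR_eq t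
  rw [this]; exact h

/-- quantile function, clamped to stay monotone everywhere -/
def quant (ρ : Measure ℝ) (u : ℝ) : ℝ := sInf ({t | min u 1 ≤ cdfR ρ t} ∩ Icc 0 1)

lemma cdfR_one (hsupp : ρ (Icc (0:ℝ) 1) = 1) : cdfR ρ (1:ℝ) = 1 := by
  have h2 : ρ (Icc (0:ℝ) 1) ≤ ρ (Iic 1) := measure_mono (fun z hz => hz.2)
  have : ρ (Iic (1:ℝ)) = 1 := le_antisymm prob_le_one (hsupp ▸ h2)
  rw [cdfR, this, ENNReal.toReal_one]

lemma cdfR_neg (hsupp : ρ (Icc (0:ℝ) 1) = 1) {t : ℝ} (ht : t < 0) : cdfR ρ t = 0 := by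
  have hc : ρ (Icc (0:ℝ) 1)ᶜ = 0 := by
    rw [measure_compl measurableSet_Icc (measure_ne_top ρ _), hsupp, measure_univ, tsub_self]
  have : ρ (Iic t) = 0 := by
    refine le_antisymm (le_trans (measure_mono ?_) hc.le) zero_le
    intro z hz
    simp only [mem_Iic] at hz
    simp only [mem_compl_iff, mem_Icc, not_and_or, not_le]
    left; linarith
  rw [cdfR, this, ENNReal.toReal_zero]

lemma quant_set_nonempty (hsupp : ρ (Icc (0:ℝ) 1) = 1) {u : ℝ} :
    ({t | min u 1 ≤ cdfR ρ t} ∩ Icc 0 1).Nonempty :=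
  ⟨1, by simp only [mem_inter_iff, mem_setOf_eq, cdfR_one hsupp]; exact ⟨min_le_right u 1, by norm_num⟩⟩

lemma quant_set_bddBelow {u : ℝ} : BddBelow ({t | min u 1 ≤ cdfR ρ t} ∩ Icc 0 1) :=
  ⟨0, fun t ht => ht.2.1⟩

lemma quant_mem_Icc (hsupp : ρ (Icc (0:ℝ) 1) = 1) {u : ℝ} : quant ρ u ∈ Icc (0:ℝ) 1 := by
  constructor
  · exact le_csInf (quant_set_nonempty hsupp) (fun t ht => ht.2.1)
  · refine csInf_le quant_set_bddBelow ?_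
    simp only [mem_inter_iff, mem_setOf_eq, cdfR_one hsupp]
    exact ⟨min_le_right u 1, by norm_num⟩

lemma quant_mono (hsupp : ρ (Icc (0:ℝ) 1) = 1) : Monotone (quant ρ) := fun u v huv =>
  csInf_le_csInf quant_set_bddBelow (quant_set_nonempty hsupp)
    (fun t ht => ⟨le_trans (min_le_min_right 1 huv) ht.1, ht.2⟩)

lemma measurable_quant (hsupp : ρ (Icc (0:ℝ) 1) = 1) : Measurable (quant ρ) :=
  (quant_mono hsupp).measurable

lemma le_cdfR_quant (hsupp : ρ (Icc (0:ℝ) 1) = 1) {u : ℝ} (hu : u ≤ 1) :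
    u ≤ cdfR ρ (quant ρ u) := by
  have hmin : min u 1 = u := min_eq_left hu
  have key : ∀ s, quant ρ u < s → u ≤ cdfR ρ s := by
    intro s hs
    obtain ⟨s', hs', hs's⟩ := exists_lt_of_csInf_lt (quant_set_nonempty hsupp) hs
    calc u = min u 1 := hmin.symm
    _ ≤ cdfR ρ s' := hs'.1
    _ ≤ cdfR ρ s := cdfR_mono hs's.le
  have hcont : ContinuousWithinAt (cdfR ρ) (Ioi (quant ρ u)) (quant ρ u) :=
    (cdfR_right_continuous _).mono (fun z hz => mem_Ici.mpr (le_of_lt (mem_Ioi.mp hz)))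
  refine ge_of_tendsto hcont ?_
  exact eventually_nhdsWithin_of_forall (fun s hs => key s hs)

/-- the key Galois property -/
lemma quant_le_iff (hsupp : ρ (Icc (0:ℝ) 1) = 1) {u t : ℝ} (hu : 0 < u) (hu1 : u ≤ 1) :
    quant ρ u ≤ t ↔ u ≤ cdfR ρ t := by
  constructor
  · intro h
    exact le_trans (le_cdfR_quant hsupp hu1) (cdfR_mono h)
  · intro h
    rcases le_or_gt t 1 with ht1 | ht1
    · rcases le_or_gt 0 t with ht0 | ht0
      · exact csInf_le quant_set_bddBelow ⟨by simpa [min_eq_left hu1] using h, ht0, ht1⟩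
      · exact absurd h (by rw [cdfR_neg hsupp ht0]; push_neg; exact hu)
    · exact le_trans (quant_mem_Icc hsupp).2 ht1.le

/-- symmetric-difference interval computation, `Ico` version -/
lemma vol_symmdiff_Ico {a b : ℝ} (ha : a ∈ Icc (0:ℝ) 1) (hb : b ∈ Icc (0:ℝ) 1) :
    volume (Icc (0:ℝ) 1 ∩ {t | (a ≤ t) ≠ (b ≤ t)}) = ENNReal.ofReal |a - b| := by
  have hset : {t | (a ≤ t) ≠ (b ≤ t)} = Ico (min a b) (max a b) := by
    ext t
    simp only [mem_setOf_eq, mem_Ico, ne_eq, eq_iff_iff]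
    constructor
    · intro hne
      by_cases h1 : a ≤ t <;> by_cases h2 : b ≤ t
      · exact absurd (iff_of_true h1 h2) hne
      · exact ⟨le_trans (min_le_left a b) h1, lt_of_lt_of_le (not_le.mp h2) (le_max_right a b)⟩
      · exact ⟨le_trans (min_le_right a b) h2, lt_of_lt_of_le (not_le.mp h1) (le_max_left a b)⟩
      · exact absurd (iff_of_false h1 h2) hne
    · rintro ⟨hmin, hmax⟩ hiff
      rcases le_total a b with h | h
      · rw [min_eq_left h] at hmin
        rw [max_eq_right h] at hmax
        exact absurd (hiff.mp hmin) (not_le.mpr hmax)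
      · rw [min_eq_right h] at hmin
        rw [max_eq_left h] at hmax
        exact absurd (hiff.mpr hmin) (not_le.mpr hmax)
  have hsub : Ico (min a b) (max a b) ⊆ Icc (0:ℝ) 1 := fun t ht =>
    ⟨le_trans (le_min ha.1 hb.1) ht.1, le_of_lt (lt_of_lt_of_le ht.2 (max_le ha.2 hb.2))⟩
  rw [hset, inter_eq_right.mpr hsub, Real.volume_Ico]
  congr 1
  rcases le_total a b with h | h
  · rw [min_eq_left h, max_eq_right h, abs_of_nonpos (by linarith)]; ring
  · rw [min_eq_right h, max_eq_left h, abs_of_nonneg (by linarith)]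

/-- symmetric-difference interval computation, `Ioc` version -/
lemma vol_symmdiff_Ioc {a b : ℝ} (ha : a ∈ Icc (0:ℝ) 1) (hb : b ∈ Icc (0:ℝ) 1) :
    volume (Ioc (0:ℝ) 1 ∩ {u | (u ≤ a) ≠ (u ≤ b)}) = ENNReal.ofReal |a - b| := by
  have hset : {u | (u ≤ a) ≠ (u ≤ b)} = Ioc (min a b) (max a b) := by
    ext u
    simp only [mem_setOf_eq, mem_Ioc, ne_eq, eq_iff_iff]
    constructor
    · intro hne
      by_cases h1 : u ≤ a <;> by_cases h2 : u ≤ b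
      · exact absurd (iff_of_true h1 h2) hne
      · exact ⟨lt_of_le_of_lt (min_le_right a b) (not_le.mp h2), le_trans h1 (le_max_left a b)⟩
      · exact ⟨lt_of_le_of_lt (min_le_left a b) (not_le.mp h1), le_trans h2 (le_max_right a b)⟩
      · exact absurd (iff_of_false h1 h2) hne
    · rintro ⟨hmin, hmax⟩ hiff
      rcases le_total a b with h | h
      · rw [min_eq_left h] at hmin
        rw [max_eq_right h] at hmax
        exact absurd (hiff.mpr hmax) (not_le.mpr hmin)
      · rw [min_eq_right h] at hmin
        rw [max_eq_left h] at hmax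
        exact absurd (hiff.mp hmax) (not_le.mpr hmin)
  have hsub : Ioc (min a b) (max a b) ⊆ Ioc (0:ℝ) 1 := fun u hu =>
    ⟨lt_of_le_of_lt (le_min ha.1 hb.1) hu.1, le_trans hu.2 (max_le ha.2 hb.2)⟩
  rw [hset, inter_eq_right.mpr hsub, Real.volume_Ioc]
  congr 1
  rcases le_total a b with h | h
  · rw [min_eq_left h, max_eq_right h, abs_of_nonpos (by linarith)]; ring
  · rw [min_eq_right h, max_eq_left h, abs_of_nonneg (by linarith)]


instance leb01_prob : IsProbabilityMeasure (volume.restrict (Icc (0:ℝ) 1)) :=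
  ⟨by rw [Measure.restrict_apply MeasurableSet.univ, univ_inter, Real.volume_Icc]; norm_num⟩

lemma Iic_inter_Icc {a : ℝ} (ha : a ∈ Icc (0:ℝ) 1) :
    Iic a ∩ Icc (0:ℝ) 1 = Icc 0 a := by
  ext u
  simp only [mem_inter_iff, mem_Iic, mem_Icc]
  exact ⟨fun ⟨h, h0, _⟩ => ⟨h0, h⟩, fun ⟨h0, h⟩ => ⟨h, h0, le_trans h ha.2⟩⟩

lemma leb01_Iic {a : ℝ} (ha : a ∈ Icc (0:ℝ) 1) :
    (volume.restrict (Icc (0:ℝ) 1)) (Iic a) = ENNReal.ofReal a := by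
  rw [Measure.restrict_apply measurableSet_Iic, Iic_inter_Icc ha, Real.volume_Icc, sub_zero]

lemma vol_inter_Icc_eq_Ioc (C : Set ℝ) :
    volume (C ∩ Icc (0:ℝ) 1) = volume (C ∩ Ioc (0:ℝ) 1) := by
  refine le_antisymm ?_ (measure_mono (inter_subset_inter_right C Ioc_subset_Icc_self))
  have hsub : C ∩ Icc (0:ℝ) 1 ⊆ (C ∩ Ioc (0:ℝ) 1) ∪ {0} := by
    rintro u ⟨huC, hu0, hu1⟩
    rcases eq_or_lt_of_le hu0 with h | h
    · exact Or.inr (by simp [← h])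
    · exact Or.inl ⟨huC, h, hu1⟩
  calc volume (C ∩ Icc (0:ℝ) 1) ≤ volume ((C ∩ Ioc (0:ℝ) 1) ∪ {0}) := measure_mono hsub
  _ ≤ volume (C ∩ Ioc (0:ℝ) 1) + volume {0} := measure_union_le _ _
  _ = volume (C ∩ Ioc (0:ℝ) 1) := by rw [Real.volume_singleton, add_zero]

lemma coupling_ae_mem {γ : Measure (ℝ × ℝ)} [IsProbabilityMeasure γ]
    (h1 : γ.map Prod.fst = ρ) (h2 : γ.map Prod.snd = volume.restrict (Icc (0:ℝ) 1))
    (hsupp : ρ (Icc (0:ℝ) 1) = 1) :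
    ∀ᵐ p ∂γ, p.1 ∈ Icc (0:ℝ) 1 ∧ p.2 ∈ Icc (0:ℝ) 1 := by
  have hA : γ {p : ℝ × ℝ | p.1 ∉ Icc (0:ℝ) 1} = 0 := by
    have : γ {p : ℝ × ℝ | p.1 ∉ Icc (0:ℝ) 1} = γ.map Prod.fst (Icc (0:ℝ) 1)ᶜ := by
      rw [Measure.map_apply measurable_fst measurableSet_Icc.compl]; rfl
    rw [this, h1, measure_compl measurableSet_Icc (measure_ne_top ρ _), hsupp, measure_univ,
      tsub_self]
  have hB : γ {p : ℝ × ℝ | p.2 ∉ Icc (0:ℝ) 1} = 0 := by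
    have : γ {p : ℝ × ℝ | p.2 ∉ Icc (0:ℝ) 1} = γ.map Prod.snd (Icc (0:ℝ) 1)ᶜ := by
      rw [Measure.map_apply measurable_snd measurableSet_Icc.compl]; rfl
    rw [this, h2, Measure.restrict_apply measurableSet_Icc.compl, compl_inter_self,
      measure_empty]
  have h := measure_union_le {p : ℝ × ℝ | p.1 ∉ Icc (0:ℝ) 1} {p : ℝ × ℝ | p.2 ∉ Icc (0:ℝ) 1}
    (μ := γ)
  rw [hA, hB, add_zero] at h
  rw [ae_iff]
  refine le_antisymm (le_trans (measure_mono ?_) h) zero_le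
  intro p hp
  simp only [mem_setOf_eq, not_and_or] at hp ⊢
  exact hp


lemma measurableSet_ne_le {α : Type*} [MeasurableSpace α] {f g h k : α → ℝ}
    (hf : Measurable f) (hg : Measurable g) (hh : Measurable h) (hk : Measurable k) :
    MeasurableSet {q | (f q ≤ g q) ≠ (h q ≤ k q)} := by
  have : {q | (f q ≤ g q) ≠ (h q ≤ k q)} =
      ({q | f q ≤ g q} \ {q | h q ≤ k q}) ∪ ({q | h q ≤ k q} \ {q | f q ≤ g q}) := by
    ext q
    simp only [mem_setOf_eq, mem_union, mem_diff, ne_eq, eq_iff_iff]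
    tauto
  rw [this]
  exact ((measurableSet_le hf hg).diff (measurableSet_le hh hk)).union
    ((measurableSet_le hh hk).diff (measurableSet_le hf hg))

lemma lintegral_dist_ge {γ : Measure (ℝ × ℝ)} [IsProbabilityMeasure γ]
    (h1 : γ.map Prod.fst = ρ) (h2 : γ.map Prod.snd = volume.restrict (Icc (0:ℝ) 1))
    (hsupp : ρ (Icc (0:ℝ) 1) = 1) :
    ∫⁻ t in Icc (0:ℝ) 1, ENNReal.ofReal |cdfR ρ t - t| ≤
      ∫⁻ p, ENNReal.ofReal (dist p.1 p.2) ∂γ := by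
  set S : Set ((ℝ × ℝ) × ℝ) := {q | (q.1.1 ≤ q.2) ≠ (q.1.2 ≤ q.2)} with hS
  have hSm : MeasurableSet S :=
    measurableSet_ne_le (measurable_fst.fst) measurable_snd (measurable_fst.snd) measurable_snd
  -- pointwise identity
  have hpt : ∀ p : ℝ × ℝ, p.1 ∈ Icc (0:ℝ) 1 → p.2 ∈ Icc (0:ℝ) 1 →
      ENNReal.ofReal (dist p.1 p.2) =
        ∫⁻ t in Icc (0:ℝ) 1, S.indicator 1 (p, t) := by
    intro p hp1 hp2
    have hsec : (fun t => S.indicator (1 : ((ℝ × ℝ) × ℝ) → ℝ≥0∞) (p, t)) =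
        fun t => ({t | (p.1 ≤ t) ≠ (p.2 ≤ t)}).indicator (1 : ℝ → ℝ≥0∞) t := by
      funext t
      by_cases h : (p.1 ≤ t) ≠ (p.2 ≤ t) <;>
        simp [hS, Set.indicator_apply, mem_setOf_eq, h]
    rw [hsec]
    have hAm : MeasurableSet {t : ℝ | (p.1 ≤ t) ≠ (p.2 ≤ t)} :=
      measurableSet_ne_le (measurable_const) measurable_id measurable_const measurable_id
    rw [lintegral_indicator_one₀ hAm.nullMeasurableSet, Measure.restrict_apply hAm,
      inter_comm, vol_symmdiff_Ico hp1 hp2, Real.dist_eq]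
  calc ∫⁻ t in Icc (0:ℝ) 1, ENNReal.ofReal |cdfR ρ t - t|
      ≤ ∫⁻ t in Icc (0:ℝ) 1, γ {p : ℝ × ℝ | (p.1 ≤ t) ≠ (p.2 ≤ t)} := by
        refine lintegral_mono_ae ((ae_restrict_iff' measurableSet_Icc).mpr (ae_of_all _ ?_))
        intro t ht
        have hA : γ {p : ℝ × ℝ | p.1 ≤ t} = ENNReal.ofReal (cdfR ρ t) := by
          have : γ {p : ℝ × ℝ | p.1 ≤ t} = γ.map Prod.fst (Iic t) := by
            rw [Measure.map_apply measurable_fst measurableSet_Iic]; rfl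
          rw [this, h1, ofReal_cdfR]
        have hB : γ {p : ℝ × ℝ | p.2 ≤ t} = ENNReal.ofReal t := by
          have : γ {p : ℝ × ℝ | p.2 ≤ t} = γ.map Prod.snd (Iic t) := by
            rw [Measure.map_apply measurable_snd measurableSet_Iic]; rfl
          rw [this, h2, leb01_Iic ht]
        have hsub1 : {p : ℝ × ℝ | p.1 ≤ t} \ {p : ℝ × ℝ | p.2 ≤ t} ⊆
            {p : ℝ × ℝ | (p.1 ≤ t) ≠ (p.2 ≤ t)} := by
          rintro p ⟨ha, hb⟩
          simp only [mem_setOf_eq, ne_eq, eq_iff_iff]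
          tauto
        have hsub2 : {p : ℝ × ℝ | p.2 ≤ t} \ {p : ℝ × ℝ | p.1 ≤ t} ⊆
            {p : ℝ × ℝ | (p.1 ≤ t) ≠ (p.2 ≤ t)} := by
          rintro p ⟨ha, hb⟩
          simp only [mem_setOf_eq, ne_eq, eq_iff_iff]
          tauto
        rcases le_total (cdfR ρ t) t with h | h
        · have habs : |cdfR ρ t - t| = t - cdfR ρ t := by
            rw [abs_of_nonpos (by linarith)]; ring
          rw [habs, ENNReal.ofReal_sub _ (cdfR_nonneg t)]
          rw [← hB, ← hA]
          refine le_trans (tsub_le_iff_right.mpr ?_) (measure_mono hsub2)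
          calc γ {p : ℝ × ℝ | p.2 ≤ t}
              ≤ γ (({p : ℝ × ℝ | p.2 ≤ t} \ {p : ℝ × ℝ | p.1 ≤ t}) ∪ {p : ℝ × ℝ | p.1 ≤ t}) :=
                measure_mono (fun p hp => by by_cases h' : p.1 ≤ t <;> simp [hp, h'])
            _ ≤ _ := measure_union_le _ _
        · have habs : |cdfR ρ t - t| = cdfR ρ t - t := abs_of_nonneg (by linarith)
          rw [habs, ENNReal.ofReal_sub _ ht.1]
          rw [← hB, ← hA]
          refine le_trans (tsub_le_iff_right.mpr ?_) (measure_mono hsub1)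
          calc γ {p : ℝ × ℝ | p.1 ≤ t}
              ≤ γ (({p : ℝ × ℝ | p.1 ≤ t} \ {p : ℝ × ℝ | p.2 ≤ t}) ∪ {p : ℝ × ℝ | p.2 ≤ t}) :=
                measure_mono (fun p hp => by by_cases h' : p.2 ≤ t <;> simp [hp, h'])
            _ ≤ _ := measure_union_le _ _
    _ = ∫⁻ t in Icc (0:ℝ) 1, ∫⁻ p, S.indicator 1 (p, t) ∂γ := by
        refine lintegral_congr fun t => ?_
        have hsec : (fun p : ℝ × ℝ => S.indicator (1 : ((ℝ × ℝ) × ℝ) → ℝ≥0∞) (p, t)) =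
            fun p => ({p : ℝ × ℝ | (p.1 ≤ t) ≠ (p.2 ≤ t)}).indicator (1 : ℝ × ℝ → ℝ≥0∞) p := by
          funext p
          by_cases h : (p.1 ≤ t) ≠ (p.2 ≤ t) <;>
            simp [hS, Set.indicator_apply, mem_setOf_eq, h]
        have hCm : MeasurableSet {p : ℝ × ℝ | (p.1 ≤ t) ≠ (p.2 ≤ t)} :=
          measurableSet_ne_le measurable_fst measurable_const measurable_snd measurable_const
        rw [hsec, lintegral_indicator_one₀ hCm.nullMeasurableSet]
    _ = ∫⁻ p, (∫⁻ t in Icc (0:ℝ) 1, S.indicator 1 (p, t)) ∂γ := by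
        refine lintegral_lintegral_swap (f := fun t (p : ℝ × ℝ) => S.indicator 1 (p, t)) ?_
        exact ((measurable_one.indicator hSm).comp measurable_swap).aemeasurable
    _ = ∫⁻ p, ENNReal.ofReal (dist p.1 p.2) ∂γ := by
        refine lintegral_congr_ae ?_
        filter_upwards [coupling_ae_mem h1 h2 hsupp] with p hp
        exact (hpt p hp.1 hp.2).symm


lemma lintegral_quant_cost (hsupp : ρ (Icc (0:ℝ) 1) = 1) :
    ∫⁻ u in Icc (0:ℝ) 1, ENNReal.ofReal |quant ρ u - u| =
      ∫⁻ t in Icc (0:ℝ) 1, ENNReal.ofReal |cdfR ρ t - t| := by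
  set S : Set (ℝ × ℝ) := {q | (quant ρ q.1 ≤ q.2) ≠ (q.1 ≤ q.2)} with hS
  have hSm : MeasurableSet S :=
    measurableSet_ne_le ((measurable_quant hsupp).comp measurable_fst) measurable_snd
      measurable_fst measurable_snd
  calc ∫⁻ u in Icc (0:ℝ) 1, ENNReal.ofReal |quant ρ u - u|
      = ∫⁻ u in Icc (0:ℝ) 1, (∫⁻ t in Icc (0:ℝ) 1, S.indicator 1 (u, t)) := by
        refine lintegral_congr_ae ((ae_restrict_iff' measurableSet_Icc).mpr (ae_of_all _ ?_))
        intro u hu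
        have hsec : (fun t => S.indicator (1 : ℝ × ℝ → ℝ≥0∞) (u, t)) =
            fun t => ({t | (quant ρ u ≤ t) ≠ (u ≤ t)}).indicator (1 : ℝ → ℝ≥0∞) t := by
          funext t
          by_cases h : (quant ρ u ≤ t) ≠ (u ≤ t) <;>
            simp [hS, Set.indicator_apply, mem_setOf_eq, h]
        have hAm : MeasurableSet {t : ℝ | (quant ρ u ≤ t) ≠ (u ≤ t)} :=
          measurableSet_ne_le measurable_const measurable_id measurable_const measurable_id
        show ENNReal.ofReal |quant ρ u - u| = ∫⁻ t in Icc (0:ℝ) 1, S.indicator 1 (u, t)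
        rw [hsec, lintegral_indicator_one₀ hAm.nullMeasurableSet, Measure.restrict_apply hAm,
          inter_comm, vol_symmdiff_Ico (quant_mem_Icc hsupp) hu]
    _ = ∫⁻ t in Icc (0:ℝ) 1, ∫⁻ u in Icc (0:ℝ) 1, S.indicator 1 (u, t) := by
        refine lintegral_lintegral_swap (f := fun u t => S.indicator 1 (u, t)) ?_
        exact (measurable_one.indicator hSm).aemeasurable
    _ = ∫⁻ t in Icc (0:ℝ) 1, ENNReal.ofReal |cdfR ρ t - t| := by
        refine lintegral_congr_ae ((ae_restrict_iff' measurableSet_Icc).mpr (ae_of_all _ ?_))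
        intro t ht
        have hsec : (fun u => S.indicator (1 : ℝ × ℝ → ℝ≥0∞) (u, t)) =
            fun u => ({u | (quant ρ u ≤ t) ≠ (u ≤ t)}).indicator (1 : ℝ → ℝ≥0∞) u := by
          funext u
          by_cases h : (quant ρ u ≤ t) ≠ (u ≤ t) <;>
            simp [hS, Set.indicator_apply, mem_setOf_eq, h]
        have hAm : MeasurableSet {u : ℝ | (quant ρ u ≤ t) ≠ (u ≤ t)} :=
          measurableSet_ne_le (measurable_quant hsupp) measurable_const measurable_id
            measurable_const
        show (∫⁻ u in Icc (0:ℝ) 1, S.indicator 1 (u, t)) = ENNReal.ofReal |cdfR ρ t - t|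
        rw [hsec, lintegral_indicator_one₀ hAm.nullMeasurableSet, Measure.restrict_apply hAm,
          vol_inter_Icc_eq_Ioc]
        have hseteq : {u : ℝ | (quant ρ u ≤ t) ≠ (u ≤ t)} ∩ Ioc (0:ℝ) 1 =
            Ioc (0:ℝ) 1 ∩ {u | (u ≤ cdfR ρ t) ≠ (u ≤ t)} := by
          ext u
          simp only [mem_inter_iff, mem_setOf_eq, mem_Ioc]
          constructor
          · rintro ⟨hne, hu⟩
            exact ⟨hu, by rw [← quant_le_iff hsupp hu.1 hu.2]; exact hne⟩
          · rintro ⟨hu, hne⟩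
            exact ⟨by rw [quant_le_iff hsupp hu.1 hu.2]; exact hne, hu⟩
        rw [hseteq, vol_symmdiff_Ioc ⟨cdfR_nonneg t, cdfR_le_one t⟩ ht]

lemma map_quant (hsupp : ρ (Icc (0:ℝ) 1) = 1) :
    (volume.restrict (Icc (0:ℝ) 1)).map (quant ρ) = ρ := by
  refine Measure.ext_of_Iic _ _ (fun t => ?_)
  rw [Measure.map_apply (measurable_quant hsupp) measurableSet_Iic,
    Measure.restrict_apply ((measurable_quant hsupp) measurableSet_Iic),
    vol_inter_Icc_eq_Ioc]
  have hseteq : quant ρ ⁻¹' Iic t ∩ Ioc (0:ℝ) 1 = Ioc 0 (cdfR ρ t) := by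
    ext u
    simp only [mem_inter_iff, mem_preimage, mem_Iic, mem_Ioc]
    constructor
    · rintro ⟨hq, hu⟩
      exact ⟨hu.1, (quant_le_iff hsupp hu.1 hu.2).mp hq⟩
    · rintro ⟨hu0, hu⟩
      have hu1 : u ≤ 1 := le_trans hu (cdfR_le_one t)
      exact ⟨(quant_le_iff hsupp hu0 hu1).mpr hu, hu0, hu1⟩
  rw [hseteq, Real.volume_Ioc, sub_zero, ofReal_cdfR]


lemma lintegral_cdfdiff_ne_top :
    (∫⁻ t in Icc (0:ℝ) 1, ENNReal.ofReal |cdfR ρ t - t|) ≠ ⊤ := by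
  have hb : ∀ᵐ t ∂(volume.restrict (Icc (0:ℝ) 1)),
      ENNReal.ofReal |cdfR ρ t - t| ≤ 1 := by
    refine (ae_restrict_iff' measurableSet_Icc).mpr (ae_of_all _ ?_)
    intro t ht
    refine ENNReal.ofReal_le_one.mpr ?_
    rw [abs_le]
    constructor <;> [linarith [cdfR_nonneg (ρ := ρ) t, ht.2]; linarith [cdfR_le_one (ρ := ρ) t, ht.1]]
  have : (∫⁻ t in Icc (0:ℝ) 1, ENNReal.ofReal |cdfR ρ t - t|) ≤ 1 := by
    calc _ ≤ ∫⁻ _ in Icc (0:ℝ) 1, (1:ℝ≥0∞) := lintegral_mono_ae hb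
    _ = 1 := by rw [lintegral_one, measure_univ]
  exact ne_top_of_le_ne_top ENNReal.one_ne_top this

lemma B_eq_toReal :
    ∫ t in Icc (0:ℝ) 1, |cdfR ρ t - t| =
      (∫⁻ t in Icc (0:ℝ) 1, ENNReal.ofReal |cdfR ρ t - t|).toReal := by
  rw [integral_eq_lintegral_of_nonneg_ae (f := fun t => |cdfR ρ t - t|) (ae_of_all _ fun t => abs_nonneg _)
    ((measurable_cdfR.sub measurable_id').abs.aestronglyMeasurable)]

lemma lintegral_dist_ne_top {γ : Measure (ℝ × ℝ)} [IsProbabilityMeasure γ]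
    (h1 : γ.map Prod.fst = ρ) (h2 : γ.map Prod.snd = volume.restrict (Icc (0:ℝ) 1))
    (hsupp : ρ (Icc (0:ℝ) 1) = 1) :
    (∫⁻ p, ENNReal.ofReal (dist p.1 p.2) ∂γ) ≠ ⊤ := by
  have hb : ∀ᵐ p ∂γ, ENNReal.ofReal (dist p.1 p.2) ≤ 1 := by
    filter_upwards [coupling_ae_mem h1 h2 hsupp] with p hp
    refine ENNReal.ofReal_le_one.mpr ?_
    rw [Real.dist_eq, abs_le]
    constructor <;> [linarith [hp.1.1, hp.2.2]; linarith [hp.1.2, hp.2.1]]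
  have : (∫⁻ p, ENNReal.ofReal (dist p.1 p.2) ∂γ) ≤ 1 := by
    calc _ ≤ ∫⁻ _, (1:ℝ≥0∞) ∂γ := lintegral_mono_ae hb
    _ = 1 := by rw [lintegral_one, measure_univ]
  exact ne_top_of_le_ne_top ENNReal.one_ne_top this

lemma integral_dist_eq_toReal (γ : Measure (ℝ × ℝ)) :
    ∫ p, dist p.1 p.2 ∂γ = (∫⁻ p, ENNReal.ofReal (dist p.1 p.2) ∂γ).toReal := by
  rw [integral_eq_lintegral_of_nonneg_ae (ae_of_all _ fun p => dist_nonneg)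
    ((continuous_fst.dist continuous_snd).aestronglyMeasurable)]

/-- the 1-Wasserstein distance to the uniform distribution equals the L¹ distance of cdfs -/
lemma W_eq (hsupp : ρ (Icc (0:ℝ) 1) = 1) :
    W ρ (volume.restrict (Icc (0:ℝ) 1)) = ∫ t in Icc (0:ℝ) 1, |cdfR ρ t - t| := by
  have hgqm : Measurable (fun u => (quant ρ u, u)) :=
    (measurable_quant hsupp).prodMk measurable_id
  have hγ0prob : IsProbabilityMeasure
      ((volume.restrict (Icc (0:ℝ) 1)).map (fun u => (quant ρ u, u))) :=
    Measure.isProbabilityMeasure_map hgqm.aemeasurable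
  have hcoup : IsCoupling ((volume.restrict (Icc (0:ℝ) 1)).map (fun u => (quant ρ u, u))) ρ
      (volume.restrict (Icc (0:ℝ) 1)) := by
    constructor
    · rw [Measure.map_map measurable_fst hgqm]
      exact map_quant hsupp
    · rw [Measure.map_map measurable_snd hgqm]
      exact Measure.map_id
  have hcost : ∫ p, dist p.1 p.2 ∂((volume.restrict (Icc (0:ℝ) 1)).map (fun u => (quant ρ u, u)))
      = ∫ t in Icc (0:ℝ) 1, |cdfR ρ t - t| := by
    rw [integral_map hgqm.aemeasurable
      ((continuous_fst.dist continuous_snd).aestronglyMeasurable)]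
    have h1' : ∫ u in Icc (0:ℝ) 1, dist (quant ρ u) u =
        (∫⁻ u in Icc (0:ℝ) 1, ENNReal.ofReal |quant ρ u - u|).toReal := by
      rw [integral_eq_lintegral_of_nonneg_ae (ae_of_all _ fun u => dist_nonneg)
        (((measurable_quant hsupp).dist measurable_id').aestronglyMeasurable)]
      congr 1
    rw [h1', lintegral_quant_cost hsupp, ← B_eq_toReal]
  have hnonneg : ∀ r ∈ { r | ∃ γ : Measure (ℝ × ℝ), IsProbabilityMeasure γ ∧
      IsCoupling γ ρ (volume.restrict (Icc (0:ℝ) 1)) ∧ r = ∫ p, dist p.1 p.2 ∂γ }, 0 ≤ r := by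
    rintro r ⟨γ, hγp, hγc, rfl⟩
    exact integral_nonneg fun p => dist_nonneg
  have hmem : (∫ t in Icc (0:ℝ) 1, |cdfR ρ t - t|) ∈ { r | ∃ γ : Measure (ℝ × ℝ),
      IsProbabilityMeasure γ ∧ IsCoupling γ ρ (volume.restrict (Icc (0:ℝ) 1)) ∧
      r = ∫ p, dist p.1 p.2 ∂γ } :=
    ⟨_, hγ0prob, hcoup, hcost.symm⟩
  refine le_antisymm (csInf_le ⟨0, hnonneg⟩ hmem) ?_
  refine le_csInf ⟨_, hmem⟩ ?_
  rintro r ⟨γ, hγp, ⟨hc1, hc2⟩, rfl⟩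
  haveI := hγp
  rw [B_eq_toReal, integral_dist_eq_toReal γ]
  exact ENNReal.toReal_mono (lintegral_dist_ne_top hc1 hc2 hsupp)
    (lintegral_dist_ge hc1 hc2 hsupp)


/-- Cauchy-Schwarz / Jensen: square of the mean is at most the mean of squares. -/
lemma sq_integral_le {α : Type*} [MeasurableSpace α] (m : Measure α) [IsProbabilityMeasure m]
    {f : α → ℝ} (hm : AEStronglyMeasurable f m) (hb : ∀ᵐ a ∂m, |f a| ≤ 1) :
    (∫ a, f a ∂m) ^ 2 ≤ ∫ a, (f a) ^ 2 ∂m := by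
  have hmem : MemLp f 2 m := by
    refine MemLp.mono_exponent (memLp_top_of_bound hm 1 ?_) le_top
    filter_upwards [hb] with a ha
    rwa [Real.norm_eq_abs]
  have h := variance_nonneg f m
  rw [variance_eq_sub hmem] at h
  have hpow : (m[f ^ 2]) = ∫ a, (f a) ^ 2 ∂m := by
    refine integral_congr_ae (ae_of_all _ fun a => ?_)
    simp [Pi.pow_apply]
  rw [hpow] at h
  linarith

/-- the inner integral in `T` as an integral against the uniform distribution -/
lemma inner_T_eq (nu : Measure ℝ) [IsProbabilityMeasure nu] [NullSingletonClass nu]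
    (κx : Measure ℝ) [IsProbabilityMeasure κx] :
    ∫ y, ((κx (Iic y)).toReal - (nu (Iic y)).toReal) ^ 2 ∂nu
      = ∫ u in Icc (0:ℝ) 1, (cdfR (κx.map (cdfR nu)) u - u) ^ 2 := by
  haveI : IsProbabilityMeasure (κx.map (cdfR nu)) :=
    Measure.isProbabilityMeasure_map measurable_cdfR.aemeasurable
  have hae : ∀ᵐ y ∂nu, (κx (Iic y)).toReal = cdfR (κx.map (cdfR nu)) (cdfR nu y) := by
    set D : Set ℝ := {u : ℝ | 0 < κx {z | cdfR nu z = u}} with hD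
    have hcount : D.Countable := Measure.countable_meas_level_set_pos measurable_cdfR
    have hDm : MeasurableSet D := hcount.measurableSet
    have hnull : nu ((cdfR nu) ⁻¹' D) = 0 := by
      rw [← Measure.map_apply measurable_cdfR hDm, pit nu, Measure.restrict_apply hDm]
      exact le_antisymm (le_trans (measure_mono (inter_subset_left))
        (hcount.measure_zero volume).le) zero_le
    rw [ae_iff]
    refine le_antisymm (le_trans (measure_mono ?_) hnull.le) zero_le
    intro y hy
    simp only [mem_setOf_eq] at hy
    simp only [mem_preimage, hD, mem_setOf_eq]
    -- show : 0 < κx {z | cdfR nu z = cdfR nu y}, by contradiction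
    by_contra hpos
    push_neg at hpos
    have hzero : κx {z | cdfR nu z = cdfR nu y} = 0 := le_antisymm hpos zero_le
    have hSy : κx {z | cdfR nu z ≤ cdfR nu y} = κx (Iic y) := by
      refine le_antisymm ?_ (measure_mono fun z hz => cdfR_mono hz)
      calc κx {z | cdfR nu z ≤ cdfR nu y}
          ≤ κx (Iic y ∪ {z | cdfR nu z = cdfR nu y}) := by
            refine measure_mono fun z hz => ?_
            rcases le_or_gt z y with h | h
            · exact Or.inl h
            · exact Or.inr (le_antisymm hz (cdfR_mono h.le))
        _ ≤ κx (Iic y) + κx {z | cdfR nu z = cdfR nu y} := measure_union_le _ _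
        _ = κx (Iic y) := by rw [hzero, add_zero]
    apply hy
    have hmap : cdfR (κx.map (cdfR nu)) (cdfR nu y)
        = (κx {z | cdfR nu z ≤ cdfR nu y}).toReal := by
      rw [cdfR, Measure.map_apply measurable_cdfR measurableSet_Iic]
      rfl
    rw [hmap, hSy]
  calc ∫ y, ((κx (Iic y)).toReal - (nu (Iic y)).toReal) ^ 2 ∂nu
      = ∫ y, (cdfR (κx.map (cdfR nu)) (cdfR nu y) - cdfR nu y) ^ 2 ∂nu := by
        refine integral_congr_ae ?_
        filter_upwards [hae] with y hy
        rw [hy]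
        rfl
    _ = ∫ u, (cdfR (κx.map (cdfR nu)) u - u) ^ 2 ∂(nu.map (cdfR nu)) := by
        rw [integral_map (f := fun u => (cdfR (κx.map (cdfR nu)) u - u) ^ 2) measurable_cdfR.aemeasurable
          (((measurable_cdfR.sub measurable_id').pow_const 2).aestronglyMeasurable)]
    _ = ∫ u in Icc (0:ℝ) 1, (cdfR (κx.map (cdfR nu)) u - u) ^ 2 := by rw [pit nu]

end ChatAux

set_option maxHeartbeats 1000000 in
open ChatAux in
theorem chatterjee_two_sided_bound
    (mu nu : Measure ℝ) [IsProbabilityMeasure mu] [IsProbabilityMeasure nu] [NullSingletonClass nu]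
    (pi : Measure (ℝ × ℝ)) [IsProbabilityMeasure pi]
    (hpi : IsCoupling pi mu nu)
    (K : ℝ → Measure ℝ) (hK : IsDisintegration pi mu K)
    (T A : ℝ)
    (hT : T = ∫ x, ∫ y, (((K x) (Set.Iic y)).toReal - (nu (Set.Iic y)).toReal) ^ 2 ∂nu ∂mu)
    (hA : A = ∫ x, W ((K x).map (fun y => (nu (Set.Iic y)).toReal))
      (volume.restrict (Set.Icc (0 : ℝ) 1)) ∂mu) :
    A ^ 2 ≤ T ∧ T ≤ A := by
  obtain ⟨hKmeas, hKprob, -⟩ := hK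
  haveI : ∀ x, IsProbabilityMeasure (K x) := hKprob
  haveI : ∀ x, IsProbabilityMeasure ((K x).map (cdfR nu)) :=
    fun x => Measure.isProbabilityMeasure_map measurable_cdfR.aemeasurable
  haveI : ∀ x, IsProbabilityMeasure ((K x).map (fun y => (nu (Set.Iic y)).toReal)) :=
    fun x => Measure.isProbabilityMeasure_map measurable_cdfR.aemeasurable
  have hsuppx : ∀ x, ((K x).map (cdfR nu)) (Icc (0:ℝ) 1) = 1 := by
    intro x
    rw [Measure.map_apply measurable_cdfR measurableSet_Icc]
    have hpre : (cdfR nu) ⁻¹' (Icc 0 1) = univ :=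
      eq_univ_of_forall fun y => ⟨cdfR_nonneg y, cdfR_le_one y⟩
    rw [hpre, measure_univ]
  -- joint measurability of the cdf of the pushforward kernel
  have hGmeas : Measurable (fun q : ℝ × ℝ => cdfR ((K q.1).map (cdfR nu)) q.2) := by
    have heq : (fun q : ℝ × ℝ => cdfR ((K q.1).map (cdfR nu)) q.2) =
        fun q : ℝ × ℝ => ((K q.1) {z | cdfR nu z ≤ q.2}).toReal := by
      funext q
      rw [cdfR, Measure.map_apply measurable_cdfR measurableSet_Iic]
      rfl
    rw [heq]
    have hs : MeasurableSet {q : (ℝ × ℝ) × ℝ | cdfR nu q.2 ≤ q.1.2} :=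
      measurableSet_le (measurable_cdfR.comp measurable_snd) (measurable_fst.snd)
    haveI : IsMarkovKernel (⟨fun q : ℝ × ℝ => K q.1, hKmeas.comp measurable_fst⟩ :
        Kernel (ℝ × ℝ) ℝ) :=
      ⟨fun a => hKprob a.1⟩
    have hker := Kernel.measurable_kernel_prodMk_left
      (κ := (⟨fun q : ℝ × ℝ => K q.1, hKmeas.comp measurable_fst⟩ : Kernel (ℝ × ℝ) ℝ)) hs
    exact ENNReal.measurable_toReal.comp hker
  -- rewrite A and T
  have hA' : A = ∫ x, (∫ u in Icc (0:ℝ) 1, |cdfR ((K x).map (cdfR nu)) u - u|) ∂mu := by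
    rw [hA]
    refine integral_congr_ae (ae_of_all _ fun x => ?_)
    exact W_eq (hsuppx x)
  have hT' : T = ∫ x, (∫ u in Icc (0:ℝ) 1, (cdfR ((K x).map (cdfR nu)) u - u) ^ 2) ∂mu := by
    rw [hT]
    exact integral_congr_ae (ae_of_all _ fun x => inner_T_eq nu (K x))
  -- a.e. bound on the integrand
  have hdbound : ∀ x, ∀ᵐ u ∂(volume.restrict (Icc (0:ℝ) 1)),
      |cdfR ((K x).map (cdfR nu)) u - u| ≤ 1 := by
    intro x
    refine (ae_restrict_iff' measurableSet_Icc).mpr (ae_of_all _ fun u hu => ?_)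
    rw [abs_le]
    constructor
    · linarith [cdfR_nonneg (ρ := (K x).map (cdfR nu)) u, hu.2]
    · linarith [cdfR_le_one (ρ := (K x).map (cdfR nu)) u, hu.1]
  have hint_abs : ∀ x, Integrable (fun u => |cdfR ((K x).map (cdfR nu)) u - u|)
      (volume.restrict (Icc (0:ℝ) 1)) := by
    intro x
    refine Integrable.mono' (integrable_const 1)
      ((measurable_cdfR.sub measurable_id').abs.aestronglyMeasurable) ?_
    filter_upwards [hdbound x] with u hu
    rwa [Real.norm_eq_abs, abs_abs]
  have hint_sq : ∀ x, Integrable (fun u => (cdfR ((K x).map (cdfR nu)) u - u) ^ 2)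
      (volume.restrict (Icc (0:ℝ) 1)) := by
    intro x
    refine Integrable.mono' (integrable_const 1)
      (((measurable_cdfR.sub measurable_id').pow_const 2).aestronglyMeasurable) ?_
    filter_upwards [hdbound x] with u hu
    rw [Real.norm_eq_abs, abs_pow]
    calc |cdfR ((K x).map (cdfR nu)) u - u| ^ 2 ≤ 1 ^ 2 := pow_le_pow_left₀ (abs_nonneg _) hu 2
    _ = 1 := one_pow 2
  -- pointwise s ≤ h
  have hsh : ∀ x, (∫ u in Icc (0:ℝ) 1, (cdfR ((K x).map (cdfR nu)) u - u) ^ 2)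
      ≤ ∫ u in Icc (0:ℝ) 1, |cdfR ((K x).map (cdfR nu)) u - u| := by
    intro x
    refine integral_mono_ae (hint_sq x) (hint_abs x) ?_
    filter_upwards [hdbound x] with u hu
    have h0 : (0:ℝ) ≤ |cdfR ((K x).map (cdfR nu)) u - u| := abs_nonneg _
    calc (cdfR ((K x).map (cdfR nu)) u - u) ^ 2
        = |cdfR ((K x).map (cdfR nu)) u - u| * |cdfR ((K x).map (cdfR nu)) u - u| := by
          rw [← sq_abs]; ring
    _ ≤ 1 * |cdfR ((K x).map (cdfR nu)) u - u| := mul_le_mul_of_nonneg_right hu h0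
    _ = |cdfR ((K x).map (cdfR nu)) u - u| := one_mul _
  -- pointwise Jensen: h² ≤ s
  have hhs : ∀ x, (∫ u in Icc (0:ℝ) 1, |cdfR ((K x).map (cdfR nu)) u - u|) ^ 2
      ≤ ∫ u in Icc (0:ℝ) 1, (cdfR ((K x).map (cdfR nu)) u - u) ^ 2 := by
    intro x
    have hj := sq_integral_le (volume.restrict (Icc (0:ℝ) 1))
      (f := fun u => |cdfR ((K x).map (cdfR nu)) u - u|)
      ((measurable_cdfR.sub measurable_id').abs.aestronglyMeasurable)
      (by filter_upwards [hdbound x] with u hu; rwa [abs_abs])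
    refine le_trans hj (le_of_eq (integral_congr_ae (ae_of_all _ fun u => ?_)))
    simp only [sq_abs]
  -- measurability in x
  have hhmeas : StronglyMeasurable
      (fun x => ∫ u in Icc (0:ℝ) 1, |cdfR ((K x).map (cdfR nu)) u - u|) := by
    exact StronglyMeasurable.integral_prod_right'
      (f := fun q : ℝ × ℝ => |cdfR ((K q.1).map (cdfR nu)) q.2 - q.2|)
      ((hGmeas.sub measurable_snd).abs.stronglyMeasurable)
  have hsmeas : StronglyMeasurable
      (fun x => ∫ u in Icc (0:ℝ) 1, (cdfR ((K x).map (cdfR nu)) u - u) ^ 2) := by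
    exact StronglyMeasurable.integral_prod_right'
      (f := fun q : ℝ × ℝ => (cdfR ((K q.1).map (cdfR nu)) q.2 - q.2) ^ 2)
      (((hGmeas.sub measurable_snd).pow_const 2).stronglyMeasurable)
  -- bounds on h and s
  have hh0 : ∀ x, 0 ≤ ∫ u in Icc (0:ℝ) 1, |cdfR ((K x).map (cdfR nu)) u - u| :=
    fun x => integral_nonneg fun u => abs_nonneg _
  have hs0 : ∀ x, 0 ≤ ∫ u in Icc (0:ℝ) 1, (cdfR ((K x).map (cdfR nu)) u - u) ^ 2 :=
    fun x => integral_nonneg fun u => sq_nonneg _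
  have hh1 : ∀ x, (∫ u in Icc (0:ℝ) 1, |cdfR ((K x).map (cdfR nu)) u - u|) ≤ 1 := by
    intro x
    calc (∫ u in Icc (0:ℝ) 1, |cdfR ((K x).map (cdfR nu)) u - u|) ≤ ∫ _ in Icc (0:ℝ) 1, (1:ℝ) :=
          integral_mono_ae (hint_abs x) (integrable_const 1) (hdbound x)
    _ = 1 := by simp [measure_univ]
  -- integrability over mu
  have hinth : Integrable (fun x => ∫ u in Icc (0:ℝ) 1, |cdfR ((K x).map (cdfR nu)) u - u|) mu := by
    refine Integrable.mono' (integrable_const 1) hhmeas.aestronglyMeasurable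
      (ae_of_all _ fun x => ?_)
    rw [Real.norm_eq_abs, abs_of_nonneg (hh0 x)]
    exact hh1 x
  have hints : Integrable (fun x => ∫ u in Icc (0:ℝ) 1, (cdfR ((K x).map (cdfR nu)) u - u) ^ 2) mu := by
    refine Integrable.mono' (integrable_const 1) hsmeas.aestronglyMeasurable
      (ae_of_all _ fun x => ?_)
    rw [Real.norm_eq_abs, abs_of_nonneg (hs0 x)]
    exact le_trans (hsh x) (hh1 x)
  have hinth2 : Integrable (fun x => (∫ u in Icc (0:ℝ) 1, |cdfR ((K x).map (cdfR nu)) u - u|) ^ 2) mu := by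
    refine Integrable.mono' (integrable_const 1)
      (hhmeas.pow 2).aestronglyMeasurable (ae_of_all _ fun x => ?_)
    rw [Real.norm_eq_abs, abs_pow, abs_of_nonneg (hh0 x)]
    calc (∫ u in Icc (0:ℝ) 1, |cdfR ((K x).map (cdfR nu)) u - u|) ^ 2 ≤ 1 ^ 2 :=
          pow_le_pow_left₀ (hh0 x) (hh1 x) 2
    _ = 1 := one_pow 2
  constructor
  · rw [hA', hT']
    have hAle : (∫ x, (∫ u in Icc (0:ℝ) 1, |cdfR ((K x).map (cdfR nu)) u - u|) ∂mu) ^ 2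
        ≤ ∫ x, (∫ u in Icc (0:ℝ) 1, |cdfR ((K x).map (cdfR nu)) u - u|) ^ 2 ∂mu :=
      sq_integral_le mu hhmeas.aestronglyMeasurable
        (ae_of_all _ fun x => by rw [abs_of_nonneg (hh0 x)]; exact hh1 x)
    exact le_trans hAle (integral_mono hinth2 hints hhs)
  · rw [hT', hA']
    exact integral_mono hints hinth hsh

end
end
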